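/- arXiv:1905.05429 — 12 statements merged into one kernel-verified Lean document; each statement's English description precedes it below -/
import Mathlib

section
/- Let ψ̂, φ̂ be real numbers with ψ̂ > 1 and φ̂ < 0, let c > 0, and define H(z) = (ψ̂/(ψ̂ − φ̂))(z/c)^{φ̂} − (φ̂/(ψ̂ − φ̂))(z/c)^{ψ̂} for z > 0. Then the equation H(z) = z·H′(z) has exactly one solution z ∈ (0, ∞), namely z = l·c, where l = (ψ̂(1 − φ̂)/(φ̂(1 − ψ̂)))^{1/(ψ̂ − φ̂)}. -/
open Real

/-! Writing `x = z / c`, Euler's relation `z · d/dz (z/c)^p = p (z/c)^p` turns `H z = z H′ z`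
into `ψ (1 - φ) x^φ = φ (1 - ψ) x^ψ`, i.e. `x^(ψ - φ) = ψ (1 - φ) / (φ (1 - ψ))`. The right-hand
side is positive and `ψ - φ ≠ 0`, so this has the single positive root `x = l`. -/

theorem hasDerivAt_div_const_rpow {c p z : ℝ} (hz : z ≠ 0) (hc : c ≠ 0) :
    HasDerivAt (fun w => (w / c) ^ p) (p * (z / c) ^ p / z) z := by
  have hx : z / c ≠ 0 := div_ne_zero hz hc
  refine (((hasDerivAt_id z).div_const c).rpow_const (p := p) (Or.inl hx)).congr_deriv ?_
  rw [id, rpow_sub_one hx]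
  field_simp

theorem rpow_sub_eq_div_iff {x p q a b : ℝ} (hx : 0 < x) (hb : b ≠ 0) :
    x ^ (q - p) = a / b ↔ a * x ^ p = b * x ^ q := by
  rw [rpow_sub hx, div_eq_div_iff (rpow_pos_of_pos hx p).ne' hb]
  constructor <;> intro h <;> linarith

/-- For `ψ̂ > 1`, `φ̂ < 0`, `c > 0` and
`H(z) = (ψ̂/(ψ̂ − φ̂))(z/c)^{φ̂} − (φ̂/(ψ̂ − φ̂))(z/c)^{ψ̂}`, the equation
`H(z) = z·H′(z)` has exactly one solution in `(0, ∞)`, namely `z = l·c` with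
`l = (ψ̂(1 − φ̂)/(φ̂(1 − ψ̂)))^{1/(ψ̂ − φ̂)}`. -/
theorem tangency_point_unique (ψ φ c : ℝ) (hψ : 1 < ψ) (hφ : φ < 0) (hc : 0 < c)
    (l : ℝ) (hl : l = (ψ * (1 - φ) / (φ * (1 - ψ))) ^ (1 / (ψ - φ)))
    (H : ℝ → ℝ)
    (hH : H = fun z : ℝ => ψ / (ψ - φ) * (z / c) ^ φ - φ / (ψ - φ) * (z / c) ^ ψ) :
    ∀ z : ℝ, 0 < z → (H z = z * deriv H z ↔ z = l * c) := by
  intro z hz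
  have hψφ : ψ - φ ≠ 0 := by linarith
  have hx : 0 < z / c := div_pos hz hc
  have hderiv : z * deriv H z =
      ψ / (ψ - φ) * (φ * (z / c) ^ φ) - φ / (ψ - φ) * (ψ * (z / c) ^ ψ) := by
    have hd : HasDerivAt H
        (ψ / (ψ - φ) * (φ * (z / c) ^ φ / z) - φ / (ψ - φ) * (ψ * (z / c) ^ ψ / z)) z := by
      rw [hH]
      exact ((hasDerivAt_div_const_rpow hz.ne' hc.ne').const_mul _).sub
        ((hasDerivAt_div_const_rpow hz.ne' hc.ne').const_mul _)
    rw [hd.deriv]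
    field_simp
  have hratio : 0 ≤ ψ * (1 - φ) / (φ * (1 - ψ)) := div_nonneg (by nlinarith) (by nlinarith)
  calc H z = z * deriv H z
      ↔ ψ * (1 - φ) * (z / c) ^ φ = φ * (1 - ψ) * (z / c) ^ ψ := by
        rw [hderiv, hH]
        field_simp
        constructor <;> intro h <;> linarith
    _ ↔ (z / c) ^ (ψ - φ) = ψ * (1 - φ) / (φ * (1 - ψ)) :=
        (rpow_sub_eq_div_iff hx (by nlinarith)).symm
    _ ↔ z / c = l := by rw [hl, one_div, eq_rpow_inv hx.le hratio hψφ]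
    _ ↔ z = l * c := div_eq_iff hc.ne'
end

section
/- Suppose σ_X, σ_Y > 0, κ > 0, r > μ_Y − κσ_Y and r > μ_X − κσ_X, and let c > 0. Then the function h_c : (0, ∞) → (0, ∞) defined piecewise by h_c(z) = H₃c(z) for z ≥ lc, h_c(z) = H₂c(z) for c ≤ z ≤ lc, and h_c(z) = H₁c(z) for 0 < z ≤ c, is twice continuously differentiable on (0, ∞); in particular the one-sided values, first derivatives and second derivatives of the adjacent pieces coincide at z = c and at z = lc. -/
open Real

section AuxPiecewise

open Set Filter Topology

noncomputable def GGx (k u v p q : ℝ) (z : ℝ) : ℝ := u * (z / k) ^ p + v * (z / k) ^ q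

lemma GGx_hasDerivAt {k z : ℝ} (u v p q : ℝ) (hk : 0 < k) (hz : 0 < z) :
    HasDerivAt (GGx k u v p q) (GGx k (u * (p / k)) (v * (q / k)) (p - 1) (q - 1) z) z := by
  have hzk : z / k ≠ 0 := ne_of_gt (div_pos hz hk)
  have hd : HasDerivAt (fun z : ℝ => z / k) (1 / k) z := by
    simpa using (hasDerivAt_id z).div_const k
  have h1 : HasDerivAt (fun z : ℝ => (z / k) ^ p) (1 / k * p * (z / k) ^ (p - 1)) z :=
    hd.rpow_const (Or.inl hzk)
  have h2 : HasDerivAt (fun z : ℝ => (z / k) ^ q) (1 / k * q * (z / k) ^ (q - 1)) z :=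
    hd.rpow_const (Or.inl hzk)
  have h3 := (h1.const_mul u).add (h2.const_mul v)
  refine h3.congr_deriv ?_
  simp only [GGx]; ring

lemma GGx_contDiffAt {k z : ℝ} (u v p q : ℝ) {n : WithTop ℕ∞} (hk : k ≠ 0) (hz : z ≠ 0) :
    ContDiffAt ℝ n (GGx k u v p q) z := by
  have hzk : z / k ≠ 0 := div_ne_zero hz hk
  have hd : ContDiffAt ℝ n (fun z : ℝ => z / k) z := contDiffAt_id.div_const k
  have h1 : ContDiffAt ℝ n (fun z : ℝ => (z / k) ^ p) z :=
    ContDiffAt.comp (g := fun x : ℝ => x ^ p) z (Real.contDiffAt_rpow_const_of_ne (p := p) hzk) hd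
  have h2 : ContDiffAt ℝ n (fun z : ℝ => (z / k) ^ q) z :=
    ContDiffAt.comp (g := fun x : ℝ => x ^ q) z (Real.contDiffAt_rpow_const_of_ne (p := q) hzk) hd
  exact (contDiffAt_const.mul h1).add (contDiffAt_const.mul h2)

lemma glue_hasDerivAt' {f f₁ f₂ : ℝ → ℝ} {a d : ℝ}
    (h₁ : HasDerivAt f₁ d a) (h₂ : HasDerivAt f₂ d a)
    (hle : ∀ᶠ z in 𝓝[≤] a, f z = f₁ z) (hge : ∀ᶠ z in 𝓝[≥] a, f z = f₂ z) :
    HasDerivAt f d a := by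
  have ha1 : f a = f₁ a := hle.self_of_nhdsWithin (Set.mem_Iic.mpr le_rfl)
  have ha2 : f a = f₂ a := hge.self_of_nhdsWithin (Set.mem_Ici.mpr le_rfl)
  have H1 : HasDerivWithinAt f d (Set.Iic a) a :=
    (h₁.hasDerivWithinAt).congr_of_eventuallyEq hle ha1
  have H2 : HasDerivWithinAt f d (Set.Ici a) a :=
    (h₂.hasDerivWithinAt).congr_of_eventuallyEq hge ha2
  have H3 := H1.union H2
  rw [Set.Iic_union_Ici] at H3
  rwa [hasDerivWithinAt_univ] at H3

lemma piecewise_hasDerivAt {c₁ c₂ : ℝ} {F1 F2 F3 G1 G2 G3 f g : ℝ → ℝ}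
    (h12 : c₁ < c₂)
    (hf : ∀ z, f z = if z ≤ c₁ then F1 z else if z ≤ c₂ then F2 z else F3 z)
    (hg : ∀ z, g z = if z ≤ c₁ then G1 z else if z ≤ c₂ then G2 z else G3 z)
    (hF1 : ∀ z : ℝ, 0 < z → HasDerivAt F1 (G1 z) z)
    (hF2 : ∀ z : ℝ, 0 < z → HasDerivAt F2 (G2 z) z)
    (hF3 : ∀ z : ℝ, 0 < z → HasDerivAt F3 (G3 z) z)
    (hv1 : F1 c₁ = F2 c₁) (hd1 : G1 c₁ = G2 c₁)
    (hv2 : F2 c₂ = F3 c₂) (hd2 : G2 c₂ = G3 c₂) :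
    ∀ z : ℝ, 0 < z → HasDerivAt f (g z) z := by
  intro z hz
  rcases lt_trichotomy z c₁ with hzc | rfl | hzc
  · have he : f =ᶠ[𝓝 z] F1 := by
      filter_upwards [Iio_mem_nhds hzc] with w hw
      rw [hf w, if_pos hw.le]
    have hgz : g z = G1 z := by rw [hg z, if_pos hzc.le]
    rw [hgz]
    exact (hF1 z hz).congr_of_eventuallyEq he
  · have hgz : g z = G1 z := by rw [hg z, if_pos le_rfl]
    rw [hgz]
    apply glue_hasDerivAt' (hF1 z hz) (hd1 ▸ hF2 z hz)
    · filter_upwards [eventually_mem_nhdsWithin] with w hw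
      rw [hf w, if_pos (Set.mem_Iic.mp hw)]
    · have hmem : Set.Ico z c₂ ∈ 𝓝[≥] z := Ico_mem_nhdsGE_of_mem ⟨le_rfl, h12⟩
      filter_upwards [hmem] with w hw
      rcases eq_or_lt_of_le hw.1 with heq | hlt
      · rw [← heq, hf z, if_pos le_rfl, hv1]
      · rw [hf w, if_neg (not_le.mpr hlt), if_pos hw.2.le]
  · rcases lt_trichotomy z c₂ with hzc2 | rfl | hzc2
    · have he : f =ᶠ[𝓝 z] F2 := by
        filter_upwards [Ioo_mem_nhds hzc hzc2] with w hw
        rw [hf w, if_neg (not_le.mpr hw.1), if_pos hw.2.le]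
      have hgz : g z = G2 z := by rw [hg z, if_neg (not_le.mpr hzc), if_pos hzc2.le]
      rw [hgz]
      exact (hF2 z hz).congr_of_eventuallyEq he
    · have hgz : g z = G2 z := by rw [hg z, if_neg (not_le.mpr hzc), if_pos le_rfl]
      rw [hgz]
      apply glue_hasDerivAt' (hF2 z hz) (hd2 ▸ hF3 z hz)
      · have hmem : Set.Ioc c₁ z ∈ 𝓝[≤] z := Ioc_mem_nhdsLE_of_mem ⟨hzc, le_rfl⟩
        filter_upwards [hmem] with w hw
        rw [hf w, if_neg (not_le.mpr hw.1), if_pos hw.2]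
      · filter_upwards [eventually_mem_nhdsWithin] with w hw
        rcases eq_or_lt_of_le (Set.mem_Ici.mp hw) with heq | hlt
        · rw [← heq, hf z, if_neg (not_le.mpr hzc), if_pos le_rfl, hv2]
        · rw [hf w, if_neg (not_le.mpr (hzc.trans hlt)), if_neg (not_le.mpr hlt)]
    · have he : f =ᶠ[𝓝 z] F3 := by
        filter_upwards [Ioi_mem_nhds hzc2] with w hw
        rw [hf w, if_neg (not_le.mpr (h12.trans hw)), if_neg (not_le.mpr hw)]
      have hgz : g z = G3 z := by
        rw [hg z, if_neg (not_le.mpr (h12.trans hzc2)), if_neg (not_le.mpr hzc2)]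
      rw [hgz]
      exact (hF3 z hz).congr_of_eventuallyEq he

lemma glue_continuousAt' {f f₁ f₂ : ℝ → ℝ} {a : ℝ}
    (h₁ : ContinuousAt f₁ a) (h₂ : ContinuousAt f₂ a)
    (hle : ∀ᶠ z in 𝓝[≤] a, f z = f₁ z) (hge : ∀ᶠ z in 𝓝[≥] a, f z = f₂ z) :
    ContinuousAt f a := by
  have ha1 : f a = f₁ a := hle.self_of_nhdsWithin (Set.mem_Iic.mpr le_rfl)
  have ha2 : f a = f₂ a := hge.self_of_nhdsWithin (Set.mem_Ici.mpr le_rfl)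
  have H1 : ContinuousWithinAt f (Set.Iic a) a :=
    (h₁.continuousWithinAt).congr_of_eventuallyEq hle ha1
  have H2 : ContinuousWithinAt f (Set.Ici a) a :=
    (h₂.continuousWithinAt).congr_of_eventuallyEq hge ha2
  have H3 := H1.union H2
  rw [Set.Iic_union_Ici] at H3
  rwa [continuousWithinAt_univ] at H3

lemma piecewise_continuousAt {c₁ c₂ : ℝ} {F1 F2 F3 f : ℝ → ℝ}
    (h12 : c₁ < c₂)
    (hf : ∀ z, f z = if z ≤ c₁ then F1 z else if z ≤ c₂ then F2 z else F3 z)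
    (hF1 : ∀ z : ℝ, 0 < z → ContinuousAt F1 z)
    (hF2 : ∀ z : ℝ, 0 < z → ContinuousAt F2 z)
    (hF3 : ∀ z : ℝ, 0 < z → ContinuousAt F3 z)
    (hv1 : F1 c₁ = F2 c₁) (hv2 : F2 c₂ = F3 c₂) :
    ∀ z : ℝ, 0 < z → ContinuousAt f z := by
  intro z hz
  rcases lt_trichotomy z c₁ with hzc | rfl | hzc
  · have he : f =ᶠ[𝓝 z] F1 := by
      filter_upwards [Iio_mem_nhds hzc] with w hw
      rw [hf w, if_pos hw.le]
    exact (hF1 z hz).congr he.symm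
  · apply glue_continuousAt' (hF1 z hz) (hF2 z hz)
    · filter_upwards [eventually_mem_nhdsWithin] with w hw
      rw [hf w, if_pos (Set.mem_Iic.mp hw)]
    · have hmem : Set.Ico z c₂ ∈ 𝓝[≥] z := Ico_mem_nhdsGE_of_mem ⟨le_rfl, h12⟩
      filter_upwards [hmem] with w hw
      rcases eq_or_lt_of_le hw.1 with heq | hlt
      · rw [← heq, hf z, if_pos le_rfl, hv1]
      · rw [hf w, if_neg (not_le.mpr hlt), if_pos hw.2.le]
  · rcases lt_trichotomy z c₂ with hzc2 | rfl | hzc2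
    · have he : f =ᶠ[𝓝 z] F2 := by
        filter_upwards [Ioo_mem_nhds hzc hzc2] with w hw
        rw [hf w, if_neg (not_le.mpr hw.1), if_pos hw.2.le]
      exact (hF2 z hz).congr he.symm
    · apply glue_continuousAt' (hF2 z hz) (hF3 z hz)
      · have hmem : Set.Ioc c₁ z ∈ 𝓝[≤] z := Ioc_mem_nhdsLE_of_mem ⟨hzc, le_rfl⟩
        filter_upwards [hmem] with w hw
        rw [hf w, if_neg (not_le.mpr hw.1), if_pos hw.2]
      · filter_upwards [eventually_mem_nhdsWithin] with w hw
        rcases eq_or_lt_of_le (Set.mem_Ici.mp hw) with heq | hlt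
        · rw [← heq, hf z, if_neg (not_le.mpr hzc), if_pos le_rfl, hv2]
        · rw [hf w, if_neg (not_le.mpr (hzc.trans hlt)), if_neg (not_le.mpr hlt)]
    · have he : f =ᶠ[𝓝 z] F3 := by
        filter_upwards [Ioi_mem_nhds hzc2] with w hw
        rw [hf w, if_neg (not_le.mpr (h12.trans hw)), if_neg (not_le.mpr hw)]
      exact (hF3 z hz).congr he.symm

lemma vieta_aux {S B C x y : ℝ} (hx : 1/2*S*x*(x-1) + B*x + C = 0)
    (hy : 1/2*S*y*(y-1) + B*y + C = 0) (hxy : x ≠ y) :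
    S*(x*y) = 2*C ∧ S*((1-x)*(1-y)) = 2*(B+C) := by
  have key : (x - y) * (1/2*S*(x+y) - 1/2*S + B) = 0 := by linear_combination hx - hy
  have hsum : 1/2*S*(x+y) - 1/2*S + B = 0 :=
    (mul_eq_zero.mp key).resolve_left (sub_ne_zero.mpr hxy)
  constructor
  · linear_combination 2*x*hsum - 2*hx
  · linear_combination (2*x - 2)*hsum - 2*hx

end AuxPiecewise

set_option maxHeartbeats 2000000 in
/-- The piecewise harmonic function `h_c` (equal to `H₁c` on `(0,c]`,
`H₂c` on `[c, lc]`, `H₃c` on `[lc, ∞)`) is twice continuously differentiable on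
`(0, ∞)`; in particular the one-sided values, first and second derivatives of the
adjacent pieces coincide at `z = c` and at `z = lc`. -/
theorem h_c_twice_continuously_differentiable (μX μY σX σY κ r c : ℝ)
    (hσX : 0 < σX) (hσY : 0 < σY) (hκ : 0 < κ)
    (hr1 : μY - κ * σY < r) (hr2 : μX - κ * σX < r) (hc : 0 < c)
    (ψ1 φ1 ψ2 φ2 ψ3 φ3 : ℝ)
    (hψ1 : 1 / 2 * (σX ^ 2 + σY ^ 2) * ψ1 * (ψ1 - 1) + (μX - μY + κ * (σX + σY)) * ψ1 +
      μY - κ * σY - r = 0)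
    (hφ1 : 1 / 2 * (σX ^ 2 + σY ^ 2) * φ1 * (φ1 - 1) + (μX - μY + κ * (σX + σY)) * φ1 +
      μY - κ * σY - r = 0)
    (hord1 : φ1 < 0 ∧ 0 < ψ1)
    (hψ2 : 1 / 2 * (σX ^ 2 + σY ^ 2) * ψ2 * (ψ2 - 1) + (μX - μY - κ * (σX - σY)) * ψ2 +
      μY - κ * σY - r = 0)
    (hφ2 : 1 / 2 * (σX ^ 2 + σY ^ 2) * φ2 * (φ2 - 1) + (μX - μY - κ * (σX - σY)) * φ2 +
      μY - κ * σY - r = 0)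
    (hord2 : φ2 < 0 ∧ 1 < ψ2)
    (hψ3 : 1 / 2 * (σX ^ 2 + σY ^ 2) * ψ3 * (ψ3 - 1) + (μX - μY - κ * (σX + σY)) * ψ3 +
      μY + κ * σY - r = 0)
    (hφ3 : 1 / 2 * (σX ^ 2 + σY ^ 2) * φ3 * (φ3 - 1) + (μX - μY - κ * (σX + σY)) * φ3 +
      μY + κ * σY - r = 0)
    (hord3 : φ3 < 1 ∧ 1 < ψ3)
    (l : ℝ) (hl : l = (ψ2 * (1 - φ2) / (φ2 * (1 - ψ2))) ^ (1 / (ψ2 - φ2)))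
    (H1 H2 H3 h : ℝ → ℝ)
    (hH1 : H1 = fun z : ℝ =>
      ψ1 / (ψ1 - φ1) * (z / c) ^ φ1 - φ1 / (ψ1 - φ1) * (z / c) ^ ψ1)
    (hH2 : H2 = fun z : ℝ =>
      ψ2 / (ψ2 - φ2) * (z / c) ^ φ2 - φ2 / (ψ2 - φ2) * (z / c) ^ ψ2)
    (hH3 : H3 = fun z : ℝ =>
      ψ2 / (ψ2 - 1) * l ^ φ2 *
        ((1 - φ3) / (ψ3 - φ3) * (z / (l * c)) ^ ψ3 +
          (ψ3 - 1) / (ψ3 - φ3) * (z / (l * c)) ^ φ3))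
    (hh : h = fun z : ℝ => if z ≤ c then H1 z else if z ≤ l * c then H2 z else H3 z) :
    ContDiffOn ℝ 2 h (Set.Ioi (0 : ℝ)) ∧
    (H1 c = H2 c ∧ deriv H1 c = deriv H2 c ∧ deriv (deriv H1) c = deriv (deriv H2) c) ∧
    (H2 (l * c) = H3 (l * c) ∧ deriv H2 (l * c) = deriv H3 (l * c) ∧
      deriv (deriv H2) (l * c) = deriv (deriv H3) (l * c)) := by
  obtain ⟨hφ1n, hψ1p⟩ := hord1
  obtain ⟨hφ2n, hψ2g⟩ := hord2
  obtain ⟨hφ3l, hψ3g⟩ := hord3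
  have hS : (0:ℝ) < σX^2 + σY^2 := by positivity
  have hcne : c ≠ 0 := ne_of_gt hc
  have hd1ne : ψ1 - φ1 ≠ 0 := ne_of_gt (by linarith only [hφ1n, hψ1p])
  have hd2ne : ψ2 - φ2 ≠ 0 := ne_of_gt (by linarith only [hφ2n, hψ2g])
  have hd3ne : ψ3 - φ3 ≠ 0 := ne_of_gt (by linarith only [hφ3l, hψ3g])
  have hψ21ne : ψ2 - 1 ≠ 0 := ne_of_gt (by linarith only [hψ2g])
  have hφ2ne : φ2 ≠ 0 := ne_of_lt hφ2n
  have h1ψ2ne : 1 - ψ2 ≠ 0 := ne_of_lt (by linarith only [hψ2g])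
  -- Vieta identities
  have hψ1' : 1/2*(σX^2+σY^2)*ψ1*(ψ1-1) + (μX-μY+κ*(σX+σY))*ψ1 + (μY - κ*σY - r) = 0 := by
    linear_combination hψ1
  have hφ1' : 1/2*(σX^2+σY^2)*φ1*(φ1-1) + (μX-μY+κ*(σX+σY))*φ1 + (μY - κ*σY - r) = 0 := by
    linear_combination hφ1
  have hψ2' : 1/2*(σX^2+σY^2)*ψ2*(ψ2-1) + (μX-μY-κ*(σX-σY))*ψ2 + (μY - κ*σY - r) = 0 := by
    linear_combination hψ2
  have hφ2' : 1/2*(σX^2+σY^2)*φ2*(φ2-1) + (μX-μY-κ*(σX-σY))*φ2 + (μY - κ*σY - r) = 0 := by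
    linear_combination hφ2
  have hψ3' : 1/2*(σX^2+σY^2)*ψ3*(ψ3-1) + (μX-μY-κ*(σX+σY))*ψ3 + (μY + κ*σY - r) = 0 := by
    linear_combination hψ3
  have hφ3' : 1/2*(σX^2+σY^2)*φ3*(φ3-1) + (μX-μY-κ*(σX+σY))*φ3 + (μY + κ*σY - r) = 0 := by
    linear_combination hφ3
  have pv1 := vieta_aux hψ1' hφ1' (fun hx => hd1ne (by rw [hx]; ring))
  have pv2 := vieta_aux hψ2' hφ2' (fun hx => hd2ne (by rw [hx]; ring))
  have pv3 := vieta_aux hψ3' hφ3' (fun hx => hd3ne (by rw [hx]; ring))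
  have P12 : ψ1*φ1 = ψ2*φ2 := mul_left_cancel₀ (ne_of_gt hS) (pv1.1.trans pv2.1.symm)
  have V23 : (1-ψ2)*(1-φ2) = (1-ψ3)*(1-φ3) := by
    apply mul_left_cancel₀ (ne_of_gt hS)
    rw [pv2.2, pv3.2]; ring
  -- Facts about l
  have hbden : 0 < φ2 * (1 - ψ2) := mul_pos_of_neg_of_neg hφ2n (by linarith only [hψ2g])
  have hbasepos : 0 < ψ2 * (1 - φ2) / (φ2 * (1 - ψ2)) := div_pos (mul_pos (by linarith only [hψ2g]) (by linarith only [hφ2n])) hbden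
  have hl0 : 0 < l := by rw [hl]; exact Real.rpow_pos_of_pos hbasepos _
  have hlne : l ≠ 0 := ne_of_gt hl0
  have hd2pos : 0 < ψ2 - φ2 := by linarith only [hφ2n, hψ2g]
  have hbase1 : 1 < ψ2 * (1 - φ2) / (φ2 * (1 - ψ2)) := by
    rw [lt_div_iff₀ hbden]
    have e : ψ2*(1-φ2) - 1*(φ2*(1-ψ2)) = ψ2 - φ2 := by ring
    linarith only [e, hd2pos]
  have hl1 : 1 < l := by
    rw [hl]
    exact (Real.one_lt_rpow_iff_of_pos hbasepos).mpr
      (Or.inl ⟨hbase1, one_div_pos.mpr hd2pos⟩)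
  have hL : l ^ (ψ2 - φ2) = ψ2 * (1 - φ2) / (φ2 * (1 - ψ2)) := by
    rw [hl, ← Real.rpow_mul hbasepos.le, one_div, inv_mul_cancel₀ (ne_of_gt hd2pos),
      Real.rpow_one]
  have hlψ2e : l ^ ψ2 = l ^ φ2 * (ψ2 * (1 - φ2) / (φ2 * (1 - ψ2))) := by
    have hexp : φ2 + (ψ2 - φ2) = ψ2 := by ring
    rw [← hL, ← Real.rpow_add hl0, hexp]
  have hlφ2m1 : l ^ (φ2 - 1) = l ^ φ2 / l := by rw [Real.rpow_sub hl0, Real.rpow_one]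
  have hlψ2m1 : l ^ (ψ2 - 1) = l ^ ψ2 / l := by rw [Real.rpow_sub hl0, Real.rpow_one]
  have hlφ2m2 : l ^ (φ2 - 1 - 1) = l ^ φ2 / l / l := by
    rw [Real.rpow_sub hl0, Real.rpow_sub hl0, Real.rpow_one]
  have hlψ2m2 : l ^ (ψ2 - 1 - 1) = l ^ ψ2 / l / l := by
    rw [Real.rpow_sub hl0, Real.rpow_sub hl0, Real.rpow_one]
  have hXpos : 0 < l ^ φ2 := Real.rpow_pos_of_pos hl0 _
  have hlcpos : 0 < l * c := mul_pos hl0 hc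
  have hlcne : l * c ≠ 0 := ne_of_gt hlcpos
  have hclc : c < l * c := by
    have e : (l-1)*c = l*c - c := by ring
    have := mul_pos (show (0:ℝ) < l - 1 by linarith only [hl1]) hc
    linarith only [e, this]
  -- GGx evaluation helpers
  have GGc : ∀ u v p q : ℝ, GGx c u v p q c = u + v := by
    intro u v p q; simp [GGx, div_self hcne, Real.one_rpow]
  have GGlc : ∀ u v p q : ℝ, GGx (l*c) u v p q (l*c) = u + v := by
    intro u v p q; simp [GGx, div_self hlcne, Real.one_rpow]
  have GGl : ∀ u v p q : ℝ, GGx c u v p q (l*c) = u * l ^ p + v * l ^ q := by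
    intro u v p q; simp only [GGx]; rw [mul_div_cancel_right₀ _ hcne]
  -- coefficients
  set a1 : ℝ := ψ1/(ψ1-φ1) with ha1
  set b1 : ℝ := -(φ1/(ψ1-φ1)) with hb1
  set a2 : ℝ := ψ2/(ψ2-φ2) with ha2
  set b2 : ℝ := -(φ2/(ψ2-φ2)) with hb2
  set a3 : ℝ := ψ2/(ψ2-1) * l^φ2 * ((1-φ3)/(ψ3-φ3)) with ha3
  set b3 : ℝ := ψ2/(ψ2-1) * l^φ2 * ((ψ3-1)/(ψ3-φ3)) with hb3
  have eH1 : H1 = GGx c a1 b1 φ1 ψ1 := by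
    funext z; simp only [hH1, GGx, ha1, hb1]; ring
  have eH2 : H2 = GGx c a2 b2 φ2 ψ2 := by
    funext z; simp only [hH2, GGx, ha2, hb2]; ring
  have eH3 : H3 = GGx (l*c) a3 b3 ψ3 φ3 := by
    funext z; simp only [hH3, GGx, ha3, hb3]; ring
  -- junction equalities
  have hvc : GGx c a1 b1 φ1 ψ1 c = GGx c a2 b2 φ2 ψ2 c := by
    rw [GGc, GGc, ha1, hb1, ha2, hb2]; field_simp; ring
  have hdc : GGx c (a1*(φ1/c)) (b1*(ψ1/c)) (φ1-1) (ψ1-1) c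
      = GGx c (a2*(φ2/c)) (b2*(ψ2/c)) (φ2-1) (ψ2-1) c := by
    rw [GGc, GGc, ha1, hb1, ha2, hb2]; field_simp; ring
  have hddc : GGx c (a1*(φ1/c)*((φ1-1)/c)) (b1*(ψ1/c)*((ψ1-1)/c)) (φ1-1-1) (ψ1-1-1) c
      = GGx c (a2*(φ2/c)*((φ2-1)/c)) (b2*(ψ2/c)*((ψ2-1)/c)) (φ2-1-1) (ψ2-1-1) c := by
    rw [GGc, GGc, ha1, hb1, ha2, hb2]
    have e1 : ψ1/(ψ1-φ1)*(φ1/c)*((φ1-1)/c) + -(φ1/(ψ1-φ1))*(ψ1/c)*((ψ1-1)/c)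
        = -(ψ1*φ1)/c^2 := by field_simp; ring
    have e2 : ψ2/(ψ2-φ2)*(φ2/c)*((φ2-1)/c) + -(φ2/(ψ2-φ2))*(ψ2/c)*((ψ2-1)/c)
        = -(ψ2*φ2)/c^2 := by field_simp; ring
    rw [e1, e2, P12]
  have hvl : GGx c a2 b2 φ2 ψ2 (l*c) = GGx (l*c) a3 b3 ψ3 φ3 (l*c) := by
    rw [GGl, GGlc, ha2, hb2, ha3, hb3, hlψ2e]
    field_simp
    ring
  have hdl : GGx c (a2*(φ2/c)) (b2*(ψ2/c)) (φ2-1) (ψ2-1) (l*c)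
      = GGx (l*c) (a3*(ψ3/(l*c))) (b3*(φ3/(l*c))) (ψ3-1) (φ3-1) (l*c) := by
    rw [GGl, GGlc, ha2, hb2, ha3, hb3, hlφ2m1, hlψ2m1, hlψ2e]
    field_simp
    ring
  have hddl : GGx c (a2*(φ2/c)*((φ2-1)/c)) (b2*(ψ2/c)*((ψ2-1)/c)) (φ2-1-1) (ψ2-1-1) (l*c)
      = GGx (l*c) (a3*(ψ3/(l*c))*((ψ3-1)/(l*c))) (b3*(φ3/(l*c))*((φ3-1)/(l*c))) (ψ3-1-1) (φ3-1-1) (l*c) := by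
    have key : (1-φ2) * (ψ2-1) = (ψ3-1)*(1-φ3) := by linear_combination (-1 : ℝ) * V23
    have hE2val : GGx c (a2*(φ2/c)*((φ2-1)/c)) (b2*(ψ2/c)*((ψ2-1)/c)) (φ2-1-1) (ψ2-1-1) (l*c)
        = ψ2*(1-φ2) * l^φ2 / (l^2*c^2) := by
      rw [GGl, ha2, hb2, hlφ2m2, hlψ2m2, hlψ2e]
      field_simp
      ring
    have hE3val : GGx (l*c) (a3*(ψ3/(l*c))*((ψ3-1)/(l*c))) (b3*(φ3/(l*c))*((φ3-1)/(l*c))) (ψ3-1-1) (φ3-1-1) (l*c)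
        = ψ2*((ψ3-1)*(1-φ3)) * l^φ2 / ((ψ2-1)*(l^2*c^2)) := by
      rw [GGlc, ha3, hb3]
      field_simp
      ring
    rw [hE2val, hE3val, div_eq_div_iff (by positivity) (mul_ne_zero hψ21ne (by positivity))]
    linear_combination (l^φ2 * (l^2*c^2) * ψ2) * key
  -- derivative families
  have hDa : ∀ z : ℝ, 0 < z → HasDerivAt (GGx c a1 b1 φ1 ψ1)
      (GGx c (a1*(φ1/c)) (b1*(ψ1/c)) (φ1-1) (ψ1-1) z) z :=
    fun z hz => GGx_hasDerivAt a1 b1 φ1 ψ1 hc hz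
  have hDb : ∀ z : ℝ, 0 < z → HasDerivAt (GGx c a2 b2 φ2 ψ2)
      (GGx c (a2*(φ2/c)) (b2*(ψ2/c)) (φ2-1) (ψ2-1) z) z :=
    fun z hz => GGx_hasDerivAt a2 b2 φ2 ψ2 hc hz
  have hDc : ∀ z : ℝ, 0 < z → HasDerivAt (GGx (l*c) a3 b3 ψ3 φ3)
      (GGx (l*c) (a3*(ψ3/(l*c))) (b3*(φ3/(l*c))) (ψ3-1) (φ3-1) z) z :=
    fun z hz => GGx_hasDerivAt a3 b3 ψ3 φ3 hlcpos hz
  have hEa : ∀ z : ℝ, 0 < z → HasDerivAt (GGx c (a1*(φ1/c)) (b1*(ψ1/c)) (φ1-1) (ψ1-1))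
      (GGx c (a1*(φ1/c)*((φ1-1)/c)) (b1*(ψ1/c)*((ψ1-1)/c)) (φ1-1-1) (ψ1-1-1) z) z :=
    fun z hz => GGx_hasDerivAt _ _ _ _ hc hz
  have hEb : ∀ z : ℝ, 0 < z → HasDerivAt (GGx c (a2*(φ2/c)) (b2*(ψ2/c)) (φ2-1) (ψ2-1))
      (GGx c (a2*(φ2/c)*((φ2-1)/c)) (b2*(ψ2/c)*((ψ2-1)/c)) (φ2-1-1) (ψ2-1-1) z) z :=
    fun z hz => GGx_hasDerivAt _ _ _ _ hc hz
  have hEc : ∀ z : ℝ, 0 < z →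
      HasDerivAt (GGx (l*c) (a3*(ψ3/(l*c))) (b3*(φ3/(l*c))) (ψ3-1) (φ3-1))
      (GGx (l*c) (a3*(ψ3/(l*c))*((ψ3-1)/(l*c))) (b3*(φ3/(l*c))*((φ3-1)/(l*c))) (ψ3-1-1) (φ3-1-1) z) z :=
    fun z hz => GGx_hasDerivAt _ _ _ _ hlcpos hz
  -- glued derivative functions
  set g : ℝ → ℝ := fun z => if z ≤ c then GGx c (a1*(φ1/c)) (b1*(ψ1/c)) (φ1-1) (ψ1-1) z
    else if z ≤ l*c then GGx c (a2*(φ2/c)) (b2*(ψ2/c)) (φ2-1) (ψ2-1) z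
    else GGx (l*c) (a3*(ψ3/(l*c))) (b3*(φ3/(l*c))) (ψ3-1) (φ3-1) z with hgdef
  set kf : ℝ → ℝ := fun z =>
    if z ≤ c then GGx c (a1*(φ1/c)*((φ1-1)/c)) (b1*(ψ1/c)*((ψ1-1)/c)) (φ1-1-1) (ψ1-1-1) z
    else if z ≤ l*c then GGx c (a2*(φ2/c)*((φ2-1)/c)) (b2*(ψ2/c)*((ψ2-1)/c)) (φ2-1-1) (ψ2-1-1) z
    else GGx (l*c) (a3*(ψ3/(l*c))*((ψ3-1)/(l*c))) (b3*(φ3/(l*c))*((φ3-1)/(l*c))) (ψ3-1-1) (φ3-1-1) z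
    with hkdef
  have hf' : ∀ z, h z = if z ≤ c then GGx c a1 b1 φ1 ψ1 z
      else if z ≤ l*c then GGx c a2 b2 φ2 ψ2 z else GGx (l*c) a3 b3 ψ3 φ3 z := by
    intro z; simp only [hh, eH1, eH2, eH3]
  have hder_h : ∀ z : ℝ, 0 < z → HasDerivAt h (g z) z :=
    piecewise_hasDerivAt hclc hf' (fun z => by rw [hgdef]) hDa hDb hDc hvc hdc hvl hdl
  have hder_g : ∀ z : ℝ, 0 < z → HasDerivAt g (kf z) z :=
    piecewise_hasDerivAt hclc (fun z => by rw [hgdef]) (fun z => by rw [hkdef])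
      hEa hEb hEc hdc hddc hdl hddl
  have hcont_k : ∀ z : ℝ, 0 < z → ContinuousAt kf z :=
    piecewise_continuousAt hclc (fun z => by rw [hkdef])
      (fun z hz => (GGx_contDiffAt (n := 0) _ _ _ _ hcne (ne_of_gt hz)).continuousAt)
      (fun z hz => (GGx_contDiffAt (n := 0) _ _ _ _ hcne (ne_of_gt hz)).continuousAt)
      (fun z hz => (GGx_contDiffAt (n := 0) _ _ _ _ hlcne (ne_of_gt hz)).continuousAt)
      hddc hddl
  refine ⟨?_, ⟨?_, ?_, ?_⟩, ⟨?_, ?_, ?_⟩⟩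
  · -- ContDiffOn ℝ 2 h (Ioi 0)
    have hg1 : ContDiffOn ℝ 1 g (Set.Ioi (0:ℝ)) := by
      rw [show ((1 : WithTop ℕ∞)) = 0 + 1 by norm_num,
        contDiffOn_succ_iff_deriv_of_isOpen isOpen_Ioi]
      refine ⟨fun z hz => (hder_g z hz).differentiableAt.differentiableWithinAt, ?_, ?_⟩
      · intro hcst; exact absurd hcst (by simp)
      · rw [contDiffOn_zero]
        exact ContinuousOn.congr (fun z hz => (hcont_k z hz).continuousWithinAt)
          (fun z hz => (hder_g z hz).deriv)
    rw [show ((2 : WithTop ℕ∞)) = 1 + 1 by norm_num,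
      contDiffOn_succ_iff_deriv_of_isOpen isOpen_Ioi]
    refine ⟨fun z hz => (hder_h z hz).differentiableAt.differentiableWithinAt, ?_, ?_⟩
    · intro hcst; exact absurd hcst (by simp)
    · exact hg1.congr (fun z hz => (hder_h z hz).deriv)
  · rw [eH1, eH2]; exact hvc
  · rw [eH1, eH2, (hDa c hc).deriv, (hDb c hc).deriv]; exact hdc
  · have heq1 : deriv H1 =ᶠ[nhds c] GGx c (a1*(φ1/c)) (b1*(ψ1/c)) (φ1-1) (ψ1-1) := by
      filter_upwards [Ioi_mem_nhds hc] with w hw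
      rw [eH1, (hDa w hw).deriv]
    have heq2 : deriv H2 =ᶠ[nhds c] GGx c (a2*(φ2/c)) (b2*(ψ2/c)) (φ2-1) (ψ2-1) := by
      filter_upwards [Ioi_mem_nhds hc] with w hw
      rw [eH2, (hDb w hw).deriv]
    rw [heq1.deriv_eq, heq2.deriv_eq, (hEa c hc).deriv, (hEb c hc).deriv]
    exact hddc
  · rw [eH2, eH3]; exact hvl
  · rw [eH2, eH3, (hDb (l*c) hlcpos).deriv, (hDc (l*c) hlcpos).deriv]; exact hdl
  · have heq2 : deriv H2 =ᶠ[nhds (l*c)] GGx c (a2*(φ2/c)) (b2*(ψ2/c)) (φ2-1) (ψ2-1) := by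
      filter_upwards [Ioi_mem_nhds hlcpos] with w hw
      rw [eH2, (hDb w hw).deriv]
    have heq3 : deriv H3 =ᶠ[nhds (l*c)]
        GGx (l*c) (a3*(ψ3/(l*c))) (b3*(φ3/(l*c))) (ψ3-1) (φ3-1) := by
      filter_upwards [Ioi_mem_nhds hlcpos] with w hw
      rw [eH3, (hDc w hw).deriv]
    rw [heq2.deriv_eq, heq3.deriv_eq, (hEb (l*c) hlcpos).deriv, (hEc (l*c) hlcpos).deriv]
    exact hddl
end

section
/- Suppose σ_X, σ_Y > 0, κ > 0, r > μ_Y − κσ_Y and r > μ_X − κσ_X, and let c > 0. Then the piecewise function h_c (equal to H₁c on (0, c], H₂c on [c, lc], and H₃c on [lc, ∞)) is strictly decreasing on (0, c) and strictly increasing on (c, ∞); in particular h_c attains its global minimum at z = c with h_c(c) = 1. -/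
open Real Set
lemma hasDerivAt_comb (A B p q d : ℝ) (hd : 0 < d) {z : ℝ} (hz : 0 < z) :
    HasDerivAt (fun z : ℝ => A * (z / d) ^ p + B * (z / d) ^ q)
      ((A * p * (z / d) ^ (p - 1) + B * q * (z / d) ^ (q - 1)) / d) z := by
  have hzd : z / d ≠ 0 := ne_of_gt (div_pos hz hd)
  have h1 : HasDerivAt (fun z : ℝ => z / d) (1 / d) z := by
    simpa using (hasDerivAt_id z).div_const d
  have h2 : HasDerivAt (fun z : ℝ => (z / d) ^ p) (p * (z / d) ^ (p - 1) * (1 / d)) z :=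
    by have := (Real.hasDerivAt_rpow_const (x := z / d) (p := p) (Or.inl hzd)).comp z h1; exact this
  have h3 : HasDerivAt (fun z : ℝ => (z / d) ^ q) (q * (z / d) ^ (q - 1) * (1 / d)) z :=
    by have := (Real.hasDerivAt_rpow_const (x := z / d) (p := q) (Or.inl hzd)).comp z h1; exact this
  have := (h2.const_mul A).add (h3.const_mul B)
  exact this.congr_deriv (by ring)

lemma strictMonoOn_comb {A B p q d : ℝ} (hd : 0 < d) {D : Set ℝ}
    (hD : Convex ℝ D) (hD0 : D ⊆ Ioi 0)
    (hpos : ∀ z ∈ interior D, 0 < (A * p * (z / d) ^ (p - 1) + B * q * (z / d) ^ (q - 1)) / d) :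
    StrictMonoOn (fun z : ℝ => A * (z / d) ^ p + B * (z / d) ^ q) D := by
  apply strictMonoOn_of_deriv_pos hD
  · intro x hx
    exact (hasDerivAt_comb A B p q d hd (hD0 hx)).continuousAt.continuousWithinAt
  · intro x hx
    rw [(hasDerivAt_comb A B p q d hd (hD0 (interior_subset hx))).deriv]
    exact hpos x hx

lemma strictAntiOn_comb {A B p q d : ℝ} (hd : 0 < d) {D : Set ℝ}
    (hD : Convex ℝ D) (hD0 : D ⊆ Ioi 0)
    (hneg : ∀ z ∈ interior D, (A * p * (z / d) ^ (p - 1) + B * q * (z / d) ^ (q - 1)) / d < 0) :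
    StrictAntiOn (fun z : ℝ => A * (z / d) ^ p + B * (z / d) ^ q) D := by
  apply strictAntiOn_of_deriv_neg hD
  · intro x hx
    exact (hasDerivAt_comb A B p q d hd (hD0 hx)).continuousAt.continuousWithinAt
  · intro x hx
    rw [(hasDerivAt_comb A B p q d hd (hD0 (interior_subset hx))).deriv]
    exact hneg x hx
set_option maxHeartbeats 2000000 in
/-- The piecewise harmonic function `h_c` is strictly decreasing on
`(0, c)` and strictly increasing on `(c, ∞)`; in particular it attains its global
minimum on `(0, ∞)` at `z = c` with `h_c(c) = 1`. -/
theorem h_c_monotonicity_min (μX μY σX σY κ r c : ℝ)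
    (hσX : 0 < σX) (hσY : 0 < σY) (hκ : 0 < κ)
    (hr1 : μY - κ * σY < r) (hr2 : μX - κ * σX < r) (hc : 0 < c)
    (ψ1 φ1 ψ2 φ2 ψ3 φ3 : ℝ)
    (hψ1 : 1 / 2 * (σX ^ 2 + σY ^ 2) * ψ1 * (ψ1 - 1) + (μX - μY + κ * (σX + σY)) * ψ1 +
      μY - κ * σY - r = 0)
    (hφ1 : 1 / 2 * (σX ^ 2 + σY ^ 2) * φ1 * (φ1 - 1) + (μX - μY + κ * (σX + σY)) * φ1 +
      μY - κ * σY - r = 0)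
    (hord1 : φ1 < 0 ∧ 0 < ψ1)
    (hψ2 : 1 / 2 * (σX ^ 2 + σY ^ 2) * ψ2 * (ψ2 - 1) + (μX - μY - κ * (σX - σY)) * ψ2 +
      μY - κ * σY - r = 0)
    (hφ2 : 1 / 2 * (σX ^ 2 + σY ^ 2) * φ2 * (φ2 - 1) + (μX - μY - κ * (σX - σY)) * φ2 +
      μY - κ * σY - r = 0)
    (hord2 : φ2 < 0 ∧ 1 < ψ2)
    (hψ3 : 1 / 2 * (σX ^ 2 + σY ^ 2) * ψ3 * (ψ3 - 1) + (μX - μY - κ * (σX + σY)) * ψ3 +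
      μY + κ * σY - r = 0)
    (hφ3 : 1 / 2 * (σX ^ 2 + σY ^ 2) * φ3 * (φ3 - 1) + (μX - μY - κ * (σX + σY)) * φ3 +
      μY + κ * σY - r = 0)
    (hord3 : φ3 < 1 ∧ 1 < ψ3)
    (l : ℝ) (hl : l = (ψ2 * (1 - φ2) / (φ2 * (1 - ψ2))) ^ (1 / (ψ2 - φ2)))
    (H1 H2 H3 h : ℝ → ℝ)
    (hH1 : H1 = fun z : ℝ =>
      ψ1 / (ψ1 - φ1) * (z / c) ^ φ1 - φ1 / (ψ1 - φ1) * (z / c) ^ ψ1)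
    (hH2 : H2 = fun z : ℝ =>
      ψ2 / (ψ2 - φ2) * (z / c) ^ φ2 - φ2 / (ψ2 - φ2) * (z / c) ^ ψ2)
    (hH3 : H3 = fun z : ℝ =>
      ψ2 / (ψ2 - 1) * l ^ φ2 *
        ((1 - φ3) / (ψ3 - φ3) * (z / (l * c)) ^ ψ3 +
          (ψ3 - 1) / (ψ3 - φ3) * (z / (l * c)) ^ φ3))
    (hh : h = fun z : ℝ => if z ≤ c then H1 z else if z ≤ l * c then H2 z else H3 z) :
    StrictAntiOn h (Set.Ioo (0 : ℝ) c) ∧ StrictMonoOn h (Set.Ioi c) ∧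
    h c = 1 ∧ (∀ z ∈ Set.Ioi (0 : ℝ), h c ≤ h z) := by

  clear hψ1 hφ1 hψ2 hφ2 hψ3 hφ3 hr1 hr2 hσX hσY hκ
  obtain ⟨hφ1neg, hψ1pos⟩ := hord1
  obtain ⟨hφ2neg, hψ2gt⟩ := hord2
  obtain ⟨hφ3lt, hψ3gt⟩ := hord3
  have hΔ1 : (0:ℝ) < ψ1 - φ1 := by linarith
  have hΔ2 : (0:ℝ) < ψ2 - φ2 := by linarith
  have hΔ3 : (0:ℝ) < ψ3 - φ3 := by linarith
  set b : ℝ := ψ2 * (1 - φ2) / (φ2 * (1 - ψ2)) with hbdef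
  have hbden : 0 < φ2 * (1 - ψ2) := mul_pos_of_neg_of_neg hφ2neg (by linarith)
  have hb1 : 1 < b := by
    rw [hbdef, lt_div_iff₀ hbden]; nlinarith
  have hb0 : (0:ℝ) < b := by linarith
  have hl1 : 1 < l := by
    rw [hl]
    rw [Real.one_lt_rpow_iff_of_pos hb0]
    exact Or.inl ⟨hb1, by positivity⟩
  have hl0 : 0 < l := by linarith
  have hlc : c < l * c := by nlinarith
  have hlc0 : 0 < l * c := by positivity
  have hlpow : l ^ (ψ2 - φ2) = b := by
    rw [hl, ← Real.rpow_mul hb0.le, one_div, inv_mul_cancel₀ (ne_of_gt hΔ2), Real.rpow_one]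
  -- rewritten forms
  have hH1' : H1 = fun z : ℝ =>
      (ψ1/(ψ1-φ1)) * (z/c) ^ φ1 + (-(φ1/(ψ1-φ1))) * (z/c) ^ ψ1 := by
    rw [hH1]; funext z; ring
  have hH2' : H2 = fun z : ℝ =>
      (ψ2/(ψ2-φ2)) * (z/c) ^ φ2 + (-(φ2/(ψ2-φ2))) * (z/c) ^ ψ2 := by
    rw [hH2]; funext z; ring
  have hH3' : H3 = fun z : ℝ =>
      (ψ2/(ψ2-1) * l ^ φ2 * ((1-φ3)/(ψ3-φ3))) * (z/(l*c)) ^ ψ3 +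
      (ψ2/(ψ2-1) * l ^ φ2 * ((ψ3-1)/(ψ3-φ3))) * (z/(l*c)) ^ φ3 := by
    rw [hH3]; funext z; ring
  -- H1 strictly decreasing on (0, c]
  have hH1anti : StrictAntiOn H1 (Set.Ioc 0 c) := by
    rw [hH1']
    apply strictAntiOn_comb hc (convex_Ioc _ _) (fun x hx => hx.1)
    intro z hz
    rw [interior_Ioc] at hz
    have hu0 : 0 < z / c := div_pos hz.1 hc
    have hu1 : z / c < 1 := (div_lt_one hc).2 hz.2
    have hXY : (z/c) ^ (ψ1 - 1) < (z/c) ^ (φ1 - 1) :=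
      Real.rpow_lt_rpow_of_exponent_gt hu0 hu1 (by linarith)
    apply div_neg_of_neg_of_pos _ hc
    have key : (ψ1/(ψ1-φ1)) * φ1 * (z/c) ^ (φ1-1) + (-(φ1/(ψ1-φ1))) * ψ1 * (z/c) ^ (ψ1-1)
        = (ψ1 * φ1 / (ψ1-φ1)) * ((z/c) ^ (φ1-1) - (z/c) ^ (ψ1-1)) := by
      field_simp; ring
    rw [key]
    apply mul_neg_of_neg_of_pos
    · exact div_neg_of_neg_of_pos (by nlinarith) hΔ1
    · linarith
  -- H2 strictly increasing on [c, ∞)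
  have hH2mono : StrictMonoOn H2 (Set.Ici c) := by
    rw [hH2']
    apply strictMonoOn_comb hc (convex_Ici _) (fun x hx => lt_of_lt_of_le hc hx)
    intro z hz
    rw [interior_Ici] at hz
    have hu1 : 1 < z / c := (one_lt_div hc).2 hz
    have hXY : (z/c) ^ (φ2 - 1) < (z/c) ^ (ψ2 - 1) :=
      Real.rpow_lt_rpow_of_exponent_lt hu1 (by linarith)
    apply div_pos _ hc
    have key : (ψ2/(ψ2-φ2)) * φ2 * (z/c) ^ (φ2-1) + (-(φ2/(ψ2-φ2))) * ψ2 * (z/c) ^ (ψ2-1)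
        = (ψ2 * φ2 / (ψ2-φ2)) * ((z/c) ^ (φ2-1) - (z/c) ^ (ψ2-1)) := by
      field_simp; ring
    rw [key]
    apply mul_pos_of_neg_of_neg
    · exact div_neg_of_neg_of_pos (by nlinarith) hΔ2
    · linarith
  -- H3 strictly increasing on [l*c, ∞)
  have hK : 0 < ψ2/(ψ2-1) * l ^ φ2 :=
    mul_pos (div_pos (by linarith) (by linarith)) (Real.rpow_pos_of_pos hl0 _)
  have hH3mono : StrictMonoOn H3 (Set.Ici (l*c)) := by
    rw [hH3']
    apply strictMonoOn_comb hlc0 (convex_Ici _) (fun x hx => lt_of_lt_of_le hlc0 hx)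
    intro z hz
    rw [interior_Ici] at hz
    set u : ℝ := z / (l*c) with hu
    have hu1 : 1 < u := (one_lt_div hlc0).2 hz
    have hu0 : 0 < u := by linarith
    have hsplit : u ^ (ψ3-1) = u ^ (φ3-1) * u ^ (ψ3-φ3) := by
      rw [← Real.rpow_add hu0]; ring_nf
    have hv1 : 1 < u ^ (ψ3-φ3) :=
      (Real.one_lt_rpow_iff_of_pos hu0).2 (Or.inl ⟨hu1, hΔ3⟩)
    have hW : 0 < u ^ (φ3-1) := Real.rpow_pos_of_pos hu0 _
    apply div_pos _ hlc0
    set K := ψ2/(ψ2-1) * l ^ φ2 with hKdef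
    have hA3 : 0 < K * ((1-φ3)/(ψ3-φ3)) * ψ3 :=
      mul_pos (mul_pos hK (div_pos (by linarith) hΔ3)) (by linarith)
    have hsum : K * ((1-φ3)/(ψ3-φ3)) * ψ3 + K * ((ψ3-1)/(ψ3-φ3)) * φ3 = K := by
      field_simp; ring
    have hinner : 0 < K * ((1-φ3)/(ψ3-φ3)) * ψ3 * u ^ (ψ3-φ3) + K * ((ψ3-1)/(ψ3-φ3)) * φ3 := by
      nlinarith [mul_pos hA3 (sub_pos.2 hv1)]
    have : K * ((1-φ3)/(ψ3-φ3)) * ψ3 * u ^ (ψ3-1) + K * ((ψ3-1)/(ψ3-φ3)) * φ3 * u ^ (φ3-1)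
        = u ^ (φ3-1) * (K * ((1-φ3)/(ψ3-φ3)) * ψ3 * u ^ (ψ3-φ3) + K * ((ψ3-1)/(ψ3-φ3)) * φ3) := by
      rw [hsplit]; ring
    rw [this]
    exact mul_pos hW hinner
  -- junction value equality
  have hdivl : l * c / c = l := by field_simp
  have hdivlc : l * c / (l * c) = 1 := div_self (ne_of_gt hlc0)
  have hlψ2 : l ^ ψ2 = l ^ φ2 * b := by
    rw [← hlpow, ← Real.rpow_add hl0]; ring_nf
  have hJ : H2 (l*c) = H3 (l*c) := by
    have hne1 : ψ2 - φ2 ≠ 0 := ne_of_gt hΔ2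
    have hne2 : ψ2 - 1 ≠ 0 := ne_of_gt (by linarith)
    have hne3 : ψ3 - φ3 ≠ 0 := ne_of_gt hΔ3
    have hne4 : φ2 ≠ 0 := ne_of_lt hφ2neg
    have hne5 : 1 - ψ2 ≠ 0 := ne_of_lt (by linarith)
    rw [hH2, hH3]
    simp only [hdivl, hdivlc, Real.one_rpow]
    rw [hlψ2, hbdef]
    field_simp
    ring
  -- values of h
  have hval1 : ∀ z : ℝ, z ≤ c → h z = H1 z := by
    intro z hz; rw [hh]; simp [hz]
  have hval2 : ∀ z : ℝ, c < z → z ≤ l * c → h z = H2 z := by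
    intro z hz1 hz2; rw [hh]; simp [not_le.2 hz1, hz2]
  have hval3 : ∀ z : ℝ, l * c < z → h z = H3 z := by
    intro z hz; rw [hh]; simp [not_le.2 (lt_trans hlc hz), not_le.2 hz]
  -- h c = 1
  have hH1c : H1 c = 1 := by
    rw [hH1]
    simp [div_self (ne_of_gt hc), Real.one_rpow]
    field_simp
  have hH2c : H2 c = 1 := by
    rw [hH2]
    simp [div_self (ne_of_gt hc), Real.one_rpow]
    field_simp
  have hhc : h c = 1 := by rw [hval1 c le_rfl, hH1c]
  -- strict anti on (0,c)
  have hanti : StrictAntiOn h (Set.Ioo (0:ℝ) c) := by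
    intro x hx y hy hxy
    rw [hval1 x hx.2.le, hval1 y hy.2.le]
    exact hH1anti ⟨hx.1, hx.2.le⟩ ⟨hy.1, hy.2.le⟩ hxy
  -- strict mono on (c,∞)
  have hmono : StrictMonoOn h (Set.Ioi c) := by
    intro x hx y hy hxy
    simp only [Set.mem_Ioi] at hx hy
    by_cases hxl : x ≤ l * c
    · by_cases hyl : y ≤ l * c
      · rw [hval2 x hx hxl, hval2 y hy hyl]
        exact hH2mono hx.le hy.le hxy
      · push_neg at hyl
        rw [hval2 x hx hxl, hval3 y hyl]
        have h1 : H2 x ≤ H2 (l*c) := by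
          rcases eq_or_lt_of_le hxl with h | h
          · rw [h]
          · exact (hH2mono hx.le hlc.le h).le
        calc H2 x ≤ H2 (l*c) := h1
          _ = H3 (l*c) := hJ
          _ < H3 y := hH3mono (Set.mem_Ici.2 le_rfl) hyl.le hyl
    · push_neg at hxl
      have hyl : l * c < y := lt_trans hxl hxy
      rw [hval3 x hxl, hval3 y hyl]
      exact hH3mono hxl.le hyl.le hxy
  refine ⟨hanti, hmono, hhc, ?_⟩
  intro z hz
  simp only [Set.mem_Ioi] at hz
  rw [hhc]
  rcases lt_trichotomy z c with h | h | h
  · rw [hval1 z h.le, ← hH1c]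
    exact (hH1anti ⟨hz, h.le⟩ ⟨hc, le_rfl⟩ h).le
  · rw [h, hhc]
  · by_cases hzl : z ≤ l * c
    · rw [hval2 z h hzl, ← hH2c]
      exact (hH2mono (Set.mem_Ici.2 le_rfl) h.le h).le
    · push_neg at hzl
      rw [hval3 z hzl]
      have : H2 c < H2 (l*c) := hH2mono (Set.mem_Ici.2 le_rfl) hlc.le hlc
      have h2 : H3 (l*c) ≤ H3 z := (hH3mono (Set.mem_Ici.2 le_rfl) hzl.le hzl).le
      rw [← hJ] at h2
      rw [hH2c] at this
      linarith
end

section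
/- Suppose σ_X, σ_Y > 0, κ > 0, r > μ_Y − κσ_Y and r > μ_X − κσ_X, and let c > 0. Then the piecewise function h_c (equal to H₁c on (0, c], H₂c on [c, lc], and H₃c on [lc, ∞)) is strictly convex on (0, ∞), and it satisfies z·h_c′(z) > h_c(z) for every z > lc. -/
/-!
On each of the three intervals `h_c` is a combination of two powers of `z` with positive second
derivative: on `(0, c]` because there `z ^ (φ₁ - 2)` dominates `z ^ (ψ₁ - 2)`, on `[c, lc]` because
both coefficients in `H₂″` are positive, and on `[lc, ∞)` because there `z ^ (ψ₃ - 2)` dominates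
`z ^ (φ₃ - 2)`. The pieces join to first order: `H₁` and `H₂` both have value `1` and slope `0`
at `c`, and `l` is exactly the point where the tangent to `H₂` passes through the origin,
`H₂(lc) = lc · H₂′(lc)`, which are the value and slope of `H₃` at `lc`. Hence `h_c′` is strictly
increasing on `(0, ∞)`. Finally `z H₃′(z) − H₃(z)` is a positive multiple of
`(z/lc)^ψ₃ − (z/lc)^φ₃ > 0`.
-/
open Real Set Filter

theorem StrictMonoOn.ite_le {α β : Type*} [LinearOrder α] [Preorder β] {f g : α → β}
    {s : Set α} [hs : s.OrdConnected] {a : α} (hf : StrictMonoOn f (s ∩ Iic a))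
    (hg : StrictMonoOn g (s ∩ Ici a)) (ha : f a ≤ g a) :
    StrictMonoOn (fun x => if x ≤ a then f x else g x) s := by
  intro x hx y hy hxy
  dsimp only
  split_ifs with hxa hya hya
  · exact hf ⟨hx, hxa⟩ ⟨hy, hya⟩ hxy
  · have hay : a < y := not_le.1 hya
    have has : a ∈ s := hs.out hx hy ⟨hxa, hay.le⟩
    calc f x ≤ f a := hf.monotoneOn ⟨hx, hxa⟩ ⟨has, le_rfl⟩ hxa
      _ ≤ g a := ha
      _ < g y := hg ⟨has, le_rfl⟩ ⟨hy, hay.le⟩ hay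
  · exact absurd (hxy.le.trans hya) hxa
  · exact hg ⟨hx, (not_le.1 hxa).le⟩ ⟨hy, (not_le.1 hya).le⟩ hxy

theorem StrictMonoOn.comp_div_const_div {f : ℝ → ℝ} {s t : Set ℝ} {m : ℝ}
    (hf : StrictMonoOn f s) (hm : 0 < m) (hts : MapsTo (· / m) t s) :
    StrictMonoOn (fun z => f (z / m) / m) t := fun _ hx _ hy hxy =>
  div_lt_div_of_pos_right (hf (hts hx) (hts hy) (div_lt_div_of_pos_right hxy hm)) hm

theorem hasDerivAt_ite_le {f g f' g' : ℝ → ℝ} {a x : ℝ} (hf : HasDerivAt f (f' x) x)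
    (hg : HasDerivAt g (g' x) x) (ha : f a = g a) (ha' : f' a = g' a) :
    HasDerivAt (fun y => if y ≤ a then f y else g y) (if x ≤ a then f' x else g' x) x := by
  rcases lt_trichotomy x a with hxa | rfl | hxa
  · rw [if_pos hxa.le]
    exact hf.congr_of_eventuallyEq <| eventually_of_mem (Iio_mem_nhds hxa) fun y hy => if_pos hy.le
  · rw [if_pos le_rfl]
    have hleft : HasDerivWithinAt (fun y => if y ≤ x then f y else g y) (f' x) (Iic x) x :=
      hf.hasDerivWithinAt.congr (fun y hy => if_pos hy) (if_pos le_rfl)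
    have hright : HasDerivWithinAt (fun y => if y ≤ x then f y else g y) (f' x) (Ici x) x := by
      rw [ha']
      refine hg.hasDerivWithinAt.congr (fun y hy => ?_) (by rw [if_pos le_rfl, ha])
      split_ifs with hyx
      · rw [le_antisymm hyx hy, ha]
      · rfl
    simpa only [Iic_union_Ici, hasDerivWithinAt_univ] using hleft.union hright
  · rw [if_neg hxa.not_ge]
    exact hg.congr_of_eventuallyEq <|
      eventually_of_mem (Ioi_mem_nhds hxa) fun y hy => if_neg (not_le.2 hy)

theorem HasDerivAt.comp_div_const {f : ℝ → ℝ} {f' m z : ℝ} (hf : HasDerivAt f f' (z / m)) :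
    HasDerivAt (fun z => f (z / m)) (f' / m) z :=
  (hf.comp z ((hasDerivAt_id' z).div_const m)).congr_deriv (mul_one_div f' m)

theorem strictMonoOn_of_hasDerivAt_pos {D : Set ℝ} (hD : Convex ℝ D) {f f' : ℝ → ℝ}
    (hf : ∀ x ∈ D, HasDerivAt f (f' x) x) (hf' : ∀ x ∈ interior D, 0 < f' x) :
    StrictMonoOn f D :=
  strictMonoOn_of_hasDerivWithinAt_pos hD (fun x hx => (hf x hx).continuousAt.continuousWithinAt)
    (fun x hx => (hf x (interior_subset hx)).hasDerivWithinAt) hf'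

noncomputable section PowerCombinations

variable {φ ψ u : ℝ}

/- `H₁, H₂` of the paper are `constFit φᵢ ψᵢ (z / c)` (value 1, slope 0 at `u = 1`) and `H₃` is
`ψ₂ / (ψ₂ - 1) * l ^ φ₂ * idFit φ₃ ψ₃ (z / (l * c))` (value 1, slope 1 at `u = 1`). -/

def constFit (φ ψ u : ℝ) : ℝ := ψ / (ψ - φ) * u ^ φ - φ / (ψ - φ) * u ^ ψ

def constFitDeriv (φ ψ u : ℝ) : ℝ := ψ * φ / (ψ - φ) * (u ^ (φ - 1) - u ^ (ψ - 1))

def idFit (φ ψ u : ℝ) : ℝ := (1 - φ) / (ψ - φ) * u ^ ψ + (ψ - 1) / (ψ - φ) * u ^ φ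

def idFitDeriv (φ ψ u : ℝ) : ℝ :=
  (1 - φ) * ψ / (ψ - φ) * u ^ (ψ - 1) + (ψ - 1) * φ / (ψ - φ) * u ^ (φ - 1)

theorem constFit_one (h : φ ≠ ψ) : constFit φ ψ 1 = 1 := by
  have : ψ - φ ≠ 0 := sub_ne_zero.2 h.symm
  simp only [constFit, one_rpow, mul_one]
  field_simp

theorem constFitDeriv_one : constFitDeriv φ ψ 1 = 0 := by
  simp [constFitDeriv]

theorem idFit_one (h : φ ≠ ψ) : idFit φ ψ 1 = 1 := by
  have : ψ - φ ≠ 0 := sub_ne_zero.2 h.symm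
  simp only [idFit, one_rpow, mul_one]
  field_simp
  ring

theorem idFitDeriv_one (h : φ ≠ ψ) : idFitDeriv φ ψ 1 = 1 := by
  have : ψ - φ ≠ 0 := sub_ne_zero.2 h.symm
  simp only [idFitDeriv, one_rpow, mul_one]
  field_simp
  ring

theorem hasDerivAt_constFit (hu : 0 < u) : HasDerivAt (constFit φ ψ) (constFitDeriv φ ψ u) u := by
  have hpow (p : ℝ) := hasDerivAt_rpow_const (x := u) (p := p) (Or.inl hu.ne')
  exact (((hpow φ).const_mul _).sub ((hpow ψ).const_mul _)).congr_deriv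
    (by simp only [constFitDeriv]; ring)

theorem hasDerivAt_constFitDeriv (hu : 0 < u) :
    HasDerivAt (constFitDeriv φ ψ)
      (-(ψ * φ) / (ψ - φ) * ((1 - φ) * u ^ (φ - 2) + (ψ - 1) * u ^ (ψ - 2))) u := by
  have hpow (p : ℝ) := hasDerivAt_rpow_const (x := u) (p := p - 1) (Or.inl hu.ne')
  exact (((hpow φ).sub (hpow ψ)).const_mul _).congr_deriv
    (by simp only [sub_sub, one_add_one_eq_two]; ring)

theorem hasDerivAt_idFit (hu : 0 < u) : HasDerivAt (idFit φ ψ) (idFitDeriv φ ψ u) u := by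
  have hpow (p : ℝ) := hasDerivAt_rpow_const (x := u) (p := p) (Or.inl hu.ne')
  exact (((hpow ψ).const_mul _).add ((hpow φ).const_mul _)).congr_deriv
    (by simp only [idFitDeriv]; ring)

theorem hasDerivAt_idFitDeriv (hu : 0 < u) :
    HasDerivAt (idFitDeriv φ ψ)
      ((1 - φ) * (ψ - 1) / (ψ - φ) * (ψ * u ^ (ψ - 2) - φ * u ^ (φ - 2))) u := by
  have hpow (p : ℝ) := hasDerivAt_rpow_const (x := u) (p := p - 1) (Or.inl hu.ne')
  exact (((hpow ψ).const_mul _).add ((hpow φ).const_mul _)).congr_deriv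
    (by simp only [sub_sub, one_add_one_eq_two]; ring)

theorem strictMonoOn_constFitDeriv_Ioc (hφ : φ < 0) (hψ : 0 < ψ) :
    StrictMonoOn (constFitDeriv φ ψ) (Ioc 0 1) := by
  refine strictMonoOn_of_hasDerivAt_pos (convex_Ioc 0 1)
    (fun u hu => hasDerivAt_constFitDeriv hu.1) fun u hu => ?_
  rw [interior_Ioc] at hu
  have hle : u ^ (ψ - 2) ≤ u ^ (φ - 2) := rpow_le_rpow_of_exponent_ge hu.1 hu.2.le (by linarith)
  have hpos : 0 < u ^ (ψ - 2) := rpow_pos_of_pos hu.1 _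
  exact mul_pos (div_pos (by nlinarith) (by linarith)) (by nlinarith)

theorem strictMonoOn_constFitDeriv_Ioi (hφ : φ < 0) (hψ : 1 < ψ) :
    StrictMonoOn (constFitDeriv φ ψ) (Ioi 0) := by
  refine strictMonoOn_of_hasDerivAt_pos (convex_Ioi 0)
    (fun u hu => hasDerivAt_constFitDeriv hu) fun u hu => ?_
  rw [interior_Ioi] at hu
  exact mul_pos (div_pos (by nlinarith) (by linarith)) (add_pos
    (mul_pos (by linarith) (rpow_pos_of_pos hu _)) (mul_pos (by linarith) (rpow_pos_of_pos hu _)))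

theorem strictMonoOn_idFitDeriv (hφ : φ < 1) (hψ : 1 < ψ) :
    StrictMonoOn (idFitDeriv φ ψ) (Ici 1) := by
  refine strictMonoOn_of_hasDerivAt_pos (convex_Ici 1)
    (fun u hu => hasDerivAt_idFitDeriv (zero_lt_one.trans_le hu)) fun u hu => ?_
  rw [interior_Ici] at hu
  have hle : u ^ (φ - 2) ≤ u ^ (ψ - 2) := rpow_le_rpow_of_exponent_le hu.le (by linarith)
  have hpos : 0 < u ^ (φ - 2) := rpow_pos_of_pos (zero_lt_one.trans hu) _
  exact mul_pos (div_pos (by nlinarith) (by linarith)) (by nlinarith)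

theorem idFit_lt_mul_idFitDeriv (hφ : φ < 1) (hψ : 1 < ψ) (hu : 1 < u) :
    idFit φ ψ u < u * idFitDeriv φ ψ u := by
  have hu0 : 0 < u := zero_lt_one.trans hu
  have hlt : u ^ φ < u ^ ψ := rpow_lt_rpow_of_exponent_lt hu (by linarith)
  have hdiff : u * idFitDeriv φ ψ u - idFit φ ψ u =
      (1 - φ) * (ψ - 1) / (ψ - φ) * (u ^ ψ - u ^ φ) := by
    simp only [idFitDeriv, idFit, rpow_sub_one hu0.ne']
    field_simp
    ring
  have : 0 < (1 - φ) * (ψ - 1) / (ψ - φ) * (u ^ ψ - u ^ φ) :=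
    mul_pos (div_pos (by nlinarith) (by linarith)) (by linarith)
  linarith

theorem one_lt_tangencyPoint_and_rpow_eq (hφ : φ < 0) (hψ : 1 < ψ) :
    1 < (ψ * (1 - φ) / (φ * (1 - ψ))) ^ (1 / (ψ - φ)) ∧
      ((ψ * (1 - φ) / (φ * (1 - ψ))) ^ (1 / (ψ - φ))) ^ (ψ - φ) = ψ * (1 - φ) / (φ * (1 - ψ)) := by
  have hratio : 1 < ψ * (1 - φ) / (φ * (1 - ψ)) := by
    rw [one_lt_div (by nlinarith)]
    nlinarith
  exact ⟨one_lt_rpow hratio (one_div_pos.2 (by linarith)),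
    by rw [one_div, rpow_inv_rpow (by linarith) (by linarith)]⟩

theorem constFit_eq_and_mul_constFitDeriv_eq_of_rpow_eq {l : ℝ} (hφ : φ < 0) (hψ : 1 < ψ)
    (hl : 0 < l) (hlpow : l ^ (ψ - φ) = ψ * (1 - φ) / (φ * (1 - ψ))) :
    constFit φ ψ l = ψ / (ψ - 1) * l ^ φ ∧ l * constFitDeriv φ ψ l = ψ / (ψ - 1) * l ^ φ := by
  have hψl : l ^ ψ = l ^ φ * (ψ * (1 - φ) / (φ * (1 - ψ))) := by
    rw [← hlpow, ← rpow_add hl]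
    ring_nf
  have : φ ≠ 0 := hφ.ne
  have : ψ - φ ≠ 0 := by linarith
  have : ψ - 1 ≠ 0 := by linarith
  have : 1 - ψ ≠ 0 := by linarith
  have : l ^ φ ≠ 0 := (rpow_pos_of_pos hl φ).ne'
  constructor
  · simp only [constFit, hψl]
    field_simp
    ring
  · simp only [constFitDeriv, rpow_sub_one hl.ne', hψl]
    field_simp
    ring

end PowerCombinations

noncomputable section Tail

variable {φ ψ φ₃ ψ₃ l c z : ℝ}

/- `h_c` to the right of `c`. -/
def tail (φ ψ φ₃ ψ₃ l c z : ℝ) : ℝ :=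
  if z ≤ l * c then constFit φ ψ (z / c) else ψ / (ψ - 1) * l ^ φ * idFit φ₃ ψ₃ (z / (l * c))

def tailDeriv (φ ψ φ₃ ψ₃ l c z : ℝ) : ℝ :=
  if z ≤ l * c then constFitDeriv φ ψ (z / c) / c
  else ψ / (ψ - 1) * l ^ φ * idFitDeriv φ₃ ψ₃ (z / (l * c)) / (l * c)

theorem constFitDeriv_div_eq_idFitDeriv_div (hφ : φ < 0) (hψ : 1 < ψ) (hφψ₃ : φ₃ ≠ ψ₃)
    (hl : 0 < l) (hc : 0 < c) (hlpow : l ^ (ψ - φ) = ψ * (1 - φ) / (φ * (1 - ψ))) :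
    constFitDeriv φ ψ (l * c / c) / c =
      ψ / (ψ - 1) * l ^ φ * idFitDeriv φ₃ ψ₃ (l * c / (l * c)) / (l * c) := by
  rw [mul_div_cancel_right₀ l hc.ne', div_self (by positivity), idFitDeriv_one hφψ₃,
    ← (constFit_eq_and_mul_constFitDeriv_eq_of_rpow_eq hφ hψ hl hlpow).2]
  field_simp

theorem hasDerivAt_tail (hφ : φ < 0) (hψ : 1 < ψ) (hφψ₃ : φ₃ ≠ ψ₃) (hl : 0 < l) (hc : 0 < c)
    (hlpow : l ^ (ψ - φ) = ψ * (1 - φ) / (φ * (1 - ψ))) (hz : 0 < z) :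
    HasDerivAt (tail φ ψ φ₃ ψ₃ l c) (tailDeriv φ ψ φ₃ ψ₃ l c z) z := by
  have hvalue :
      constFit φ ψ (l * c / c) = ψ / (ψ - 1) * l ^ φ * idFit φ₃ ψ₃ (l * c / (l * c)) := by
    rw [mul_div_cancel_right₀ l hc.ne', div_self (by positivity), idFit_one hφψ₃, mul_one,
      (constFit_eq_and_mul_constFitDeriv_eq_of_rpow_eq hφ hψ hl hlpow).1]
  exact hasDerivAt_ite_le (f' := fun z => constFitDeriv φ ψ (z / c) / c)
    (g' := fun z => ψ / (ψ - 1) * l ^ φ * idFitDeriv φ₃ ψ₃ (z / (l * c)) / (l * c))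
    (hasDerivAt_constFit (div_pos hz hc)).comp_div_const
    (((hasDerivAt_idFit (u := z / (l * c)) (by positivity)).const_mul
      (ψ / (ψ - 1) * l ^ φ)).comp_div_const) hvalue
    (constFitDeriv_div_eq_idFitDeriv_div hφ hψ hφψ₃ hl hc hlpow)

theorem strictMonoOn_tailDeriv (hφ : φ < 0) (hψ : 1 < ψ) (hφ₃ : φ₃ < 1) (hψ₃ : 1 < ψ₃)
    (hl : 0 < l) (hc : 0 < c) (hlpow : l ^ (ψ - φ) = ψ * (1 - φ) / (φ * (1 - ψ))) :
    StrictMonoOn (tailDeriv φ ψ φ₃ ψ₃ l c) (Ioi 0) := by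
  have hK : 0 < ψ / (ψ - 1) * l ^ φ := mul_pos (div_pos (by linarith) (by linarith)) (by positivity)
  have hmono₂ : StrictMonoOn (fun z => constFitDeriv φ ψ (z / c) / c) (Ioi 0 ∩ Iic (l * c)) :=
    (strictMonoOn_constFitDeriv_Ioi hφ hψ).comp_div_const_div hc fun z hz => div_pos hz.1 hc
  have hK_mono : StrictMonoOn (fun u => ψ / (ψ - 1) * l ^ φ * idFitDeriv φ₃ ψ₃ u) (Ici 1) :=
    fun x hx y hy hxy => mul_lt_mul_of_pos_left (strictMonoOn_idFitDeriv hφ₃ hψ₃ hx hy hxy) hK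
  have hmono₃ : StrictMonoOn
      (fun z => ψ / (ψ - 1) * l ^ φ * idFitDeriv φ₃ ψ₃ (z / (l * c)) / (l * c))
      (Ioi 0 ∩ Ici (l * c)) :=
    hK_mono.comp_div_const_div (mul_pos hl hc) fun z hz => (one_le_div (mul_pos hl hc)).2 hz.2
  exact hmono₂.ite_le hmono₃
    (constFitDeriv_div_eq_idFitDeriv_div hφ hψ (by linarith) hl hc hlpow).le

theorem tail_lt_mul_tailDeriv (hψ : 1 < ψ) (hφ₃ : φ₃ < 1) (hψ₃ : 1 < ψ₃) (hl : 0 < l)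
    (hc : 0 < c) (hz : l * c < z) : tail φ ψ φ₃ ψ₃ l c z < z * tailDeriv φ ψ φ₃ ψ₃ l c z := by
  have hK : 0 < ψ / (ψ - 1) * l ^ φ := mul_pos (div_pos (by linarith) (by linarith)) (by positivity)
  have hlc : 0 < l * c := by positivity
  simp only [tail, tailDeriv, if_neg hz.not_ge]
  have key := idFit_lt_mul_idFitDeriv hφ₃ hψ₃ ((one_lt_div hlc).2 hz)
  calc ψ / (ψ - 1) * l ^ φ * idFit φ₃ ψ₃ (z / (l * c))
      < ψ / (ψ - 1) * l ^ φ * (z / (l * c) * idFitDeriv φ₃ ψ₃ (z / (l * c))) :=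
        mul_lt_mul_of_pos_left key hK
    _ = _ := by ring

end Tail

theorem h_c_strictly_convex_general (c : ℝ) (hc : 0 < c)
    (ψ1 φ1 ψ2 φ2 ψ3 φ3 : ℝ)
    (hord1 : φ1 < 0 ∧ 0 < ψ1)
    (hord2 : φ2 < 0 ∧ 1 < ψ2)
    (hord3 : φ3 < 1 ∧ 1 < ψ3)
    (l : ℝ) (hl : l = (ψ2 * (1 - φ2) / (φ2 * (1 - ψ2))) ^ (1 / (ψ2 - φ2)))
    (H1 H2 H3 h : ℝ → ℝ)
    (hH1 : H1 = fun z : ℝ =>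
      ψ1 / (ψ1 - φ1) * (z / c) ^ φ1 - φ1 / (ψ1 - φ1) * (z / c) ^ ψ1)
    (hH2 : H2 = fun z : ℝ =>
      ψ2 / (ψ2 - φ2) * (z / c) ^ φ2 - φ2 / (ψ2 - φ2) * (z / c) ^ ψ2)
    (hH3 : H3 = fun z : ℝ =>
      ψ2 / (ψ2 - 1) * l ^ φ2 *
        ((1 - φ3) / (ψ3 - φ3) * (z / (l * c)) ^ ψ3 +
          (ψ3 - 1) / (ψ3 - φ3) * (z / (l * c)) ^ φ3))
    (hh : h = fun z : ℝ => if z ≤ c then H1 z else if z ≤ l * c then H2 z else H3 z) :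
    StrictConvexOn ℝ (Set.Ioi (0 : ℝ)) h ∧
    (∀ z : ℝ, l * c < z → h z < z * deriv h z) := by
  obtain ⟨hφ1, hψ1⟩ := hord1
  obtain ⟨hφ2, hψ2⟩ := hord2
  obtain ⟨hφ3, hψ3⟩ := hord3
  obtain ⟨hl1, hlpow⟩ := hl ▸ one_lt_tangencyPoint_and_rpow_eq hφ2 hψ2
  have hcl : c < l * c := lt_mul_left hc hl1
  have hh' : h = fun z => if z ≤ c then constFit φ1 ψ1 (z / c) else tail φ2 ψ2 φ3 ψ3 l c z := by
    rw [hh, hH1, hH2, hH3]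
    rfl
  set h' : ℝ → ℝ := fun z =>
    if z ≤ c then constFitDeriv φ1 ψ1 (z / c) / c else tailDeriv φ2 ψ2 φ3 ψ3 l c z
  have hslope : constFitDeriv φ1 ψ1 (c / c) / c = tailDeriv φ2 ψ2 φ3 ψ3 l c c := by
    rw [tailDeriv, if_pos hcl.le, div_self hc.ne', constFitDeriv_one, constFitDeriv_one]
  have hderiv : ∀ z ∈ Ioi (0 : ℝ), HasDerivAt h (h' z) z := fun z hz => by
    rw [hh']
    refine hasDerivAt_ite_le (f' := fun z => constFitDeriv φ1 ψ1 (z / c) / c)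
      (hasDerivAt_constFit (div_pos hz hc)).comp_div_const
      (hasDerivAt_tail hφ2 hψ2 (by linarith) (by linarith) hc hlpow hz) ?_ hslope
    rw [tail, if_pos hcl.le, div_self hc.ne', constFit_one (by linarith),
      constFit_one (by linarith)]
  have hmono₁ : StrictMonoOn (fun z => constFitDeriv φ1 ψ1 (z / c) / c) (Ioi 0 ∩ Iic c) :=
    (strictMonoOn_constFitDeriv_Ioc hφ1 hψ1).comp_div_const_div hc
      fun z hz => ⟨div_pos hz.1 hc, (div_le_one hc).2 hz.2⟩
  have hmono : StrictMonoOn h' (Ioi 0) := hmono₁.ite_le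
    ((strictMonoOn_tailDeriv hφ2 hψ2 hφ3 hψ3 (by linarith) hc hlpow).mono inter_subset_left)
    hslope.le
  refine ⟨StrictMonoOn.strictConvexOn_of_deriv (convex_Ioi 0)
    (fun z hz => (hderiv z hz).continuousAt.continuousWithinAt) ?_, fun z hz => ?_⟩
  · rw [interior_Ioi]
    exact hmono.congr fun z hz => (hderiv z hz).deriv.symm
  · rw [(hderiv z (hc.trans (hcl.trans hz))).deriv, hh']
    simp only [h', if_neg (hcl.trans hz).not_ge]
    exact tail_lt_mul_tailDeriv hψ2 hφ3 hψ3 (by linarith) hc hz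

/-- The piecewise harmonic function `h_c` is strictly convex on
`(0, ∞)` and satisfies `z·h_c′(z) > h_c(z)` for every `z > lc`. -/
theorem h_c_strictly_convex (μX μY σX σY κ r c : ℝ)
    (hσX : 0 < σX) (hσY : 0 < σY) (hκ : 0 < κ)
    (hr1 : μY - κ * σY < r) (hr2 : μX - κ * σX < r) (hc : 0 < c)
    (ψ1 φ1 ψ2 φ2 ψ3 φ3 : ℝ)
    (hψ1 : 1 / 2 * (σX ^ 2 + σY ^ 2) * ψ1 * (ψ1 - 1) + (μX - μY + κ * (σX + σY)) * ψ1 +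
      μY - κ * σY - r = 0)
    (hφ1 : 1 / 2 * (σX ^ 2 + σY ^ 2) * φ1 * (φ1 - 1) + (μX - μY + κ * (σX + σY)) * φ1 +
      μY - κ * σY - r = 0)
    (hord1 : φ1 < 0 ∧ 0 < ψ1)
    (hψ2 : 1 / 2 * (σX ^ 2 + σY ^ 2) * ψ2 * (ψ2 - 1) + (μX - μY - κ * (σX - σY)) * ψ2 +
      μY - κ * σY - r = 0)
    (hφ2 : 1 / 2 * (σX ^ 2 + σY ^ 2) * φ2 * (φ2 - 1) + (μX - μY - κ * (σX - σY)) * φ2 +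
      μY - κ * σY - r = 0)
    (hord2 : φ2 < 0 ∧ 1 < ψ2)
    (hψ3 : 1 / 2 * (σX ^ 2 + σY ^ 2) * ψ3 * (ψ3 - 1) + (μX - μY - κ * (σX + σY)) * ψ3 +
      μY + κ * σY - r = 0)
    (hφ3 : 1 / 2 * (σX ^ 2 + σY ^ 2) * φ3 * (φ3 - 1) + (μX - μY - κ * (σX + σY)) * φ3 +
      μY + κ * σY - r = 0)
    (hord3 : φ3 < 1 ∧ 1 < ψ3)
    (l : ℝ) (hl : l = (ψ2 * (1 - φ2) / (φ2 * (1 - ψ2))) ^ (1 / (ψ2 - φ2)))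
    (H1 H2 H3 h : ℝ → ℝ)
    (hH1 : H1 = fun z : ℝ =>
      ψ1 / (ψ1 - φ1) * (z / c) ^ φ1 - φ1 / (ψ1 - φ1) * (z / c) ^ ψ1)
    (hH2 : H2 = fun z : ℝ =>
      ψ2 / (ψ2 - φ2) * (z / c) ^ φ2 - φ2 / (ψ2 - φ2) * (z / c) ^ ψ2)
    (hH3 : H3 = fun z : ℝ =>
      ψ2 / (ψ2 - 1) * l ^ φ2 *
        ((1 - φ3) / (ψ3 - φ3) * (z / (l * c)) ^ ψ3 +
          (ψ3 - 1) / (ψ3 - φ3) * (z / (l * c)) ^ φ3))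
    (hh : h = fun z : ℝ => if z ≤ c then H1 z else if z ≤ l * c then H2 z else H3 z) :
    StrictConvexOn ℝ (Set.Ioi (0 : ℝ)) h ∧
    (∀ z : ℝ, l * c < z → h z < z * deriv h z) :=
  h_c_strictly_convex_general c hc ψ1 φ1 ψ2 φ2 ψ3 φ3 hord1 hord2 hord3 l hl H1 H2 H3 h hH1 hH2 hH3
    hh
end

section
/- Suppose σ_X, σ_Y > 0, κ > 0, r > μ_Y − κσ_Y and r > μ_X − κσ_X, and let c > 0. Then the piecewise function h_c (equal to H₁c on (0, c], H₂c on [c, lc], and H₃c on [lc, ∞)) admits the representation h_c(z) = max(H₁c(z), H₂c(z), H₃c(z)) for all z ∈ (0, ∞). -/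
open Real

-- ## Auxiliary machinery

lemma fsign_deriv (w : ℝ) :
    HasDerivAt (fun w : ℝ => w * (Real.exp w + 1) - 2 * (Real.exp w - 1))
      (1 + (w - 1) * Real.exp w) w := by
  have h1 : HasDerivAt (fun w : ℝ => w * (Real.exp w + 1)) (1 * (Real.exp w + 1) + w * Real.exp w) w :=
    (hasDerivAt_id w).mul ((Real.hasDerivAt_exp w).add_const 1)
  have h2 : HasDerivAt (fun w : ℝ => 2 * (Real.exp w - 1)) (2 * Real.exp w) w :=
    ((Real.hasDerivAt_exp w).sub_const 1).const_mul 2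
  have := h1.sub h2
  refine this.congr_deriv ?_
  ring

lemma fmono : Monotone (fun w : ℝ => w * (Real.exp w + 1) - 2 * (Real.exp w - 1)) := by
  have hd : ∀ w : ℝ, 0 ≤ 1 + (w - 1) * Real.exp w := by
    intro w
    have h1 : -w + 1 ≤ Real.exp (-w) := Real.add_one_le_exp (-w)
    have h2 : Real.exp (-w) * Real.exp w = 1 := by
      rw [← Real.exp_add]; simp
    nlinarith [Real.exp_pos w, Real.exp_pos (-w)]
  exact monotone_of_deriv_nonneg (fun w => (fsign_deriv w).differentiableAt)
    (fun w => by rw [(fsign_deriv w).deriv]; exact hd w)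

lemma fsign_nonneg {w : ℝ} (hw : 0 ≤ w) : 0 ≤ w * (Real.exp w + 1) - 2 * (Real.exp w - 1) := by
  have := fmono hw
  simpa using this

lemma fsign_nonpos {w : ℝ} (hw : w ≤ 0) : w * (Real.exp w + 1) - 2 * (Real.exp w - 1) ≤ 0 := by
  have := fmono hw
  simpa using this

noncomputable def Fc (p x s : ℝ) : ℝ :=
  ((s + Real.sqrt (s^2+4*p))/2 * Real.exp ((s - Real.sqrt (s^2+4*p))/2 * x)
    - (s - Real.sqrt (s^2+4*p))/2 * Real.exp ((s + Real.sqrt (s^2+4*p))/2 * x))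
    / Real.sqrt (s^2+4*p)

lemma Fc_hasDeriv (p x s : ℝ) (hp : 0 < p) :
    HasDerivAt (Fc p x)
      (p * Real.exp ((s - Real.sqrt (s^2+4*p))/2 * x) *
        ((Real.sqrt (s^2+4*p) * x) * (Real.exp (Real.sqrt (s^2+4*p) * x) + 1)
          - 2 * (Real.exp (Real.sqrt (s^2+4*p) * x) - 1)) / (Real.sqrt (s^2+4*p))^3) s := by
  have hpos : 0 < s^2 + 4*p := by positivity
  have hDpos : 0 < Real.sqrt (s^2+4*p) := Real.sqrt_pos.mpr hpos
  have hD2 : (Real.sqrt (s^2+4*p))^2 = s^2+4*p := Real.sq_sqrt hpos.le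
  have h0 : HasDerivAt (fun s : ℝ => s^2+4*p) (2*s) s := by
    simpa using ((hasDerivAt_pow 2 s).add_const (4*p))
  have hD : HasDerivAt (fun s : ℝ => Real.sqrt (s^2+4*p)) (s / Real.sqrt (s^2+4*p)) s := by
    have := (Real.hasDerivAt_sqrt (ne_of_gt hpos)).comp s h0
    refine this.congr_deriv ?_
    field_simp
  have hψ : HasDerivAt (fun s : ℝ => (s + Real.sqrt (s^2+4*p))/2)
      ((1 + s / Real.sqrt (s^2+4*p))/2) s := ((hasDerivAt_id s).add hD).div_const 2
  have hφ : HasDerivAt (fun s : ℝ => (s - Real.sqrt (s^2+4*p))/2)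
      ((1 - s / Real.sqrt (s^2+4*p))/2) s := ((hasDerivAt_id s).sub hD).div_const 2
  have hEφ : HasDerivAt (fun s : ℝ => Real.exp ((s - Real.sqrt (s^2+4*p))/2 * x))
      (Real.exp ((s - Real.sqrt (s^2+4*p))/2 * x) * ((1 - s / Real.sqrt (s^2+4*p))/2 * x)) s :=
    (Real.hasDerivAt_exp _).comp s (hφ.mul_const x)
  have hEψ : HasDerivAt (fun s : ℝ => Real.exp ((s + Real.sqrt (s^2+4*p))/2 * x))
      (Real.exp ((s + Real.sqrt (s^2+4*p))/2 * x) * ((1 + s / Real.sqrt (s^2+4*p))/2 * x)) s :=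
    (Real.hasDerivAt_exp _).comp s (hψ.mul_const x)
  have hnum := (hψ.mul hEφ).sub (hφ.mul hEψ)
  have hfull := hnum.div hD (ne_of_gt hDpos)
  refine hfull.congr_deriv ?_
  simp only [Pi.sub_apply, Pi.mul_apply]
  set D := Real.sqrt (s^2+4*p) with hDdef
  have hexp : Real.exp ((s + D)/2 * x) = Real.exp ((s - D)/2 * x) * Real.exp (D * x) := by
    rw [← Real.exp_add]; ring_nf
  have hpe : p = (D^2 - s^2)/4 := by linarith
  rw [hexp, hpe]
  field_simp
  ring

lemma Fc_mono (p x : ℝ) (hp : 0 < p) (hx : 0 ≤ x) : Monotone (Fc p x) := by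
  refine monotone_of_deriv_nonneg (fun s => (Fc_hasDeriv p x s hp).differentiableAt) (fun s => ?_)
  rw [(Fc_hasDeriv p x s hp).deriv]
  have hpos : 0 < s^2 + 4*p := by positivity
  have hDpos : 0 < Real.sqrt (s^2+4*p) := Real.sqrt_pos.mpr hpos
  have hf := fsign_nonneg (mul_nonneg hDpos.le hx)
  have hE := (Real.exp_pos ((s - Real.sqrt (s^2+4*p))/2 * x)).le
  have h3 : (0:ℝ) < (Real.sqrt (s^2+4*p))^3 := by positivity
  exact div_nonneg (mul_nonneg (mul_nonneg hp.le hE) hf) h3.le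

lemma Fc_anti (p x : ℝ) (hp : 0 < p) (hx : x ≤ 0) : Antitone (Fc p x) := by
  refine antitone_of_deriv_nonpos (fun s => (Fc_hasDeriv p x s hp).differentiableAt) (fun s => ?_)
  rw [(Fc_hasDeriv p x s hp).deriv]
  have hpos : 0 < s^2 + 4*p := by positivity
  have hDpos : 0 < Real.sqrt (s^2+4*p) := Real.sqrt_pos.mpr hpos
  have hf := fsign_nonpos (mul_nonpos_of_nonneg_of_nonpos hDpos.le hx)
  have hE := (Real.exp_pos ((s - Real.sqrt (s^2+4*p))/2 * x)).le
  have h3 : (0:ℝ) < (Real.sqrt (s^2+4*p))^3 := by positivity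
  exact div_nonpos_of_nonpos_of_nonneg (mul_nonpos_of_nonneg_of_nonpos (mul_nonneg hp.le hE) hf) h3.le

lemma Fc_eq (p x ψ φ : ℝ) (hφψ : φ < ψ) (hprod : ψ * φ = -p) :
    Fc p x (ψ + φ) = (ψ * Real.exp (φ*x) - φ * Real.exp (ψ*x))/(ψ-φ) := by
  have hs : Real.sqrt ((ψ+φ)^2 + 4*p) = ψ - φ := by
    rw [show (ψ+φ)^2+4*p = (ψ-φ)^2 by nlinarith]
    exact Real.sqrt_sq (by linarith)
  rw [Fc, hs]
  have e1 : (ψ + φ + (ψ - φ))/2 = ψ := by ring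
  have e2 : (ψ + φ - (ψ - φ))/2 = φ := by ring
  rw [e1, e2]

lemma pair_le (p x ψa φa ψb φb : ℝ) (hp : 0 < p)
    (ha : ψa * φa = -p) (hb : ψb * φb = -p)
    (haord : φa < ψa) (hbord : φb < ψb)
    (hs : ψa + φa ≤ ψb + φb) (hx : 0 ≤ x) :
    (ψa * Real.exp (φa*x) - φa * Real.exp (ψa*x))/(ψa-φa)
      ≤ (ψb * Real.exp (φb*x) - φb * Real.exp (ψb*x))/(ψb-φb) := by
  rw [← Fc_eq p x ψa φa haord ha, ← Fc_eq p x ψb φb hbord hb]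
  exact Fc_mono p x hp hx hs

lemma pair_ge (p x ψa φa ψb φb : ℝ) (hp : 0 < p)
    (ha : ψa * φa = -p) (hb : ψb * φb = -p)
    (haord : φa < ψa) (hbord : φb < ψb)
    (hs : ψa + φa ≤ ψb + φb) (hx : x ≤ 0) :
    (ψb * Real.exp (φb*x) - φb * Real.exp (ψb*x))/(ψb-φb)
      ≤ (ψa * Real.exp (φa*x) - φa * Real.exp (ψa*x))/(ψa-φa) := by
  rw [← Fc_eq p x ψa φa haord ha, ← Fc_eq p x ψb φb hbord hb]
  exact Fc_anti p x hp hx hs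

lemma rpow_exp (t : ℝ) (ht : 0 < t) (a : ℝ) : t ^ a = Real.exp (a * Real.log t) := by
  rw [Real.rpow_def_of_pos ht, mul_comm]

lemma unshift_id (ψ φ y : ℝ) (hφψ : φ < ψ) :
    (1-φ)/(ψ-φ) * Real.exp (ψ*y) + (ψ-1)/(ψ-φ) * Real.exp (φ*y)
      = Real.exp y * (((ψ-1) * Real.exp ((φ-1)*y) - (φ-1) * Real.exp ((ψ-1)*y))/((ψ-1)-(φ-1))) := by
  have hne : ψ - φ ≠ 0 := by intro hcon; linarith
  have k1 : Real.exp y * Real.exp ((φ-1)*y) = Real.exp (φ*y) := by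
    rw [← Real.exp_add]; congr 1; ring
  have k2 : Real.exp y * Real.exp ((ψ-1)*y) = Real.exp (ψ*y) := by
    rw [← Real.exp_add]; congr 1; ring
  rw [← k1, ← k2]
  rw [show (ψ-1)-(φ-1) = ψ-φ by ring]
  field_simp
  ring

lemma shift_id (ψ φ lam y : ℝ) (hφ0 : φ < 0) (hψ1 : 1 < ψ)
    (hR : Real.exp (ψ*lam) = Real.exp (φ*lam) * (ψ*(1-φ)/(φ*(1-ψ)))) :
    (ψ * Real.exp (φ*(y+lam)) - φ * Real.exp (ψ*(y+lam)))/(ψ-φ)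
      = (ψ/(ψ-1) * Real.exp (φ*lam)) * Real.exp y *
        (((ψ-1) * Real.exp ((φ-1)*y) - (φ-1) * Real.exp ((ψ-1)*y))/((ψ-1)-(φ-1))) := by
  have h1 : ψ - φ ≠ 0 := by intro hcon; linarith
  have h2 : ψ - 1 ≠ 0 := by intro hcon; linarith
  have h3 : φ ≠ 0 := ne_of_lt hφ0
  have h4 : (1:ℝ) - ψ ≠ 0 := by intro hcon; linarith
  have n1 : Real.exp (φ*(y+lam)) = (Real.exp y * Real.exp ((φ-1)*y)) * Real.exp (φ*lam) := by
    rw [← Real.exp_add, ← Real.exp_add]; congr 1; ring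
  have n2 : Real.exp (ψ*(y+lam))
      = (Real.exp y * Real.exp ((ψ-1)*y)) * (Real.exp (φ*lam) * (ψ*(1-φ)/(φ*(1-ψ)))) := by
    rw [← hR, ← Real.exp_add, ← Real.exp_add]; congr 1; ring
  rw [n1, n2]
  rw [show (ψ-1)-(φ-1) = ψ-φ by ring]
  field_simp
  ring

set_option maxHeartbeats 2000000 in
/-- The piecewise harmonic function `h_c` admits the representation
`h_c(z) = max(H₁c(z), H₂c(z), H₃c(z))` for all `z ∈ (0, ∞)`. -/
theorem h_c_max_representation (μX μY σX σY κ r c : ℝ)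
    (hσX : 0 < σX) (hσY : 0 < σY) (hκ : 0 < κ)
    (hr1 : μY - κ * σY < r) (hr2 : μX - κ * σX < r) (hc : 0 < c)
    (ψ1 φ1 ψ2 φ2 ψ3 φ3 : ℝ)
    (hψ1 : 1 / 2 * (σX ^ 2 + σY ^ 2) * ψ1 * (ψ1 - 1) + (μX - μY + κ * (σX + σY)) * ψ1 +
      μY - κ * σY - r = 0)
    (hφ1 : 1 / 2 * (σX ^ 2 + σY ^ 2) * φ1 * (φ1 - 1) + (μX - μY + κ * (σX + σY)) * φ1 +
      μY - κ * σY - r = 0)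
    (hord1 : φ1 < 0 ∧ 0 < ψ1)
    (hψ2 : 1 / 2 * (σX ^ 2 + σY ^ 2) * ψ2 * (ψ2 - 1) + (μX - μY - κ * (σX - σY)) * ψ2 +
      μY - κ * σY - r = 0)
    (hφ2 : 1 / 2 * (σX ^ 2 + σY ^ 2) * φ2 * (φ2 - 1) + (μX - μY - κ * (σX - σY)) * φ2 +
      μY - κ * σY - r = 0)
    (hord2 : φ2 < 0 ∧ 1 < ψ2)
    (hψ3 : 1 / 2 * (σX ^ 2 + σY ^ 2) * ψ3 * (ψ3 - 1) + (μX - μY - κ * (σX + σY)) * ψ3 +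
      μY + κ * σY - r = 0)
    (hφ3 : 1 / 2 * (σX ^ 2 + σY ^ 2) * φ3 * (φ3 - 1) + (μX - μY - κ * (σX + σY)) * φ3 +
      μY + κ * σY - r = 0)
    (hord3 : φ3 < 1 ∧ 1 < ψ3)
    (l : ℝ) (hl : l = (ψ2 * (1 - φ2) / (φ2 * (1 - ψ2))) ^ (1 / (ψ2 - φ2)))
    (H1 H2 H3 h : ℝ → ℝ)
    (hH1 : H1 = fun z : ℝ =>
      ψ1 / (ψ1 - φ1) * (z / c) ^ φ1 - φ1 / (ψ1 - φ1) * (z / c) ^ ψ1)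
    (hH2 : H2 = fun z : ℝ =>
      ψ2 / (ψ2 - φ2) * (z / c) ^ φ2 - φ2 / (ψ2 - φ2) * (z / c) ^ ψ2)
    (hH3 : H3 = fun z : ℝ =>
      ψ2 / (ψ2 - 1) * l ^ φ2 *
        ((1 - φ3) / (ψ3 - φ3) * (z / (l * c)) ^ ψ3 +
          (ψ3 - 1) / (ψ3 - φ3) * (z / (l * c)) ^ φ3))
    (hh : h = fun z : ℝ => if z ≤ c then H1 z else if z ≤ l * c then H2 z else H3 z) :
    ∀ z : ℝ, 0 < z → h z = max (H1 z) (max (H2 z) (H3 z)) := by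
  obtain ⟨hφ1n, hψ1p⟩ := hord1
  obtain ⟨hφ2n, hψ2p⟩ := hord2
  obtain ⟨hφ3n, hψ3p⟩ := hord3
  have hS : (0:ℝ) < σX^2 + σY^2 := by positivity
  have hS0 : (σX^2 + σY^2) ≠ 0 := ne_of_gt hS
  -- Vieta: sums
  have hne1 : ψ1 - φ1 ≠ 0 := by intro hcon; linarith
  have hne2 : ψ2 - φ2 ≠ 0 := by intro hcon; linarith
  have hne3 : ψ3 - φ3 ≠ 0 := by intro hcon; linarith
  have key1 : (ψ1 - φ1) * ((σX^2+σY^2)/2 * (ψ1+φ1-1) + (μX - μY + κ*(σX+σY))) = 0 := by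
    linear_combination hψ1 - hφ1
  have hsum1 : (σX^2+σY^2)/2 * (ψ1+φ1-1) + (μX - μY + κ*(σX+σY)) = 0 :=
    (mul_eq_zero.mp key1).resolve_left hne1
  have key2 : (ψ2 - φ2) * ((σX^2+σY^2)/2 * (ψ2+φ2-1) + (μX - μY - κ*(σX-σY))) = 0 := by
    linear_combination hψ2 - hφ2
  have hsum2 : (σX^2+σY^2)/2 * (ψ2+φ2-1) + (μX - μY - κ*(σX-σY)) = 0 :=
    (mul_eq_zero.mp key2).resolve_left hne2
  have key3 : (ψ3 - φ3) * ((σX^2+σY^2)/2 * (ψ3+φ3-1) + (μX - μY - κ*(σX+σY))) = 0 := by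
    linear_combination hψ3 - hφ3
  have hsum3 : (σX^2+σY^2)/2 * (ψ3+φ3-1) + (μX - μY - κ*(σX+σY)) = 0 :=
    (mul_eq_zero.mp key3).resolve_left hne3
  -- Vieta: products
  have hSprod1 : (σX^2+σY^2) * (ψ1*φ1) = 2*(μY - κ*σY - r) := by
    linear_combination -2*hψ1 + 2*ψ1*hsum1
  have hSprod2 : (σX^2+σY^2) * (ψ2*φ2) = 2*(μY - κ*σY - r) := by
    linear_combination -2*hψ2 + 2*ψ2*hsum2
  have hSprodb2 : (σX^2+σY^2) * ((ψ2-1)*(φ2-1)) = 2*(μX - κ*σX - r) := by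
    linear_combination hSprod2 - 2*hsum2
  have hSprodb3 : (σX^2+σY^2) * ((ψ3-1)*(φ3-1)) = 2*(μX - κ*σX - r) := by
    linear_combination -2*hψ3 + 2*ψ3*hsum3 - 2*hsum3
  -- the two positive parameters
  set p : ℝ := 2*(r + κ*σY - μY)/(σX^2+σY^2) with hpdef
  set q : ℝ := 2*(r + κ*σX - μX)/(σX^2+σY^2) with hqdef
  have hp : 0 < p := div_pos (by linarith) hS
  have hq : 0 < q := div_pos (by linarith) hS
  have hprod1 : ψ1 * φ1 = -p := by
    rw [hpdef]; field_simp; linear_combination hSprod1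
  have hprod2 : ψ2 * φ2 = -p := by
    rw [hpdef]; field_simp; linear_combination hSprod2
  have hprodb2 : (ψ2-1) * (φ2-1) = -q := by
    rw [hqdef]; field_simp; linear_combination hSprodb2
  have hprodb3 : (ψ3-1) * (φ3-1) = -q := by
    rw [hqdef]; field_simp; linear_combination hSprodb3
  -- sum comparisons
  have hd12 : (σX^2+σY^2)/2 * ((ψ1+φ1) - (ψ2+φ2)) = -(2*κ*σX) := by
    linear_combination hsum1 - hsum2
  have hs12 : ψ1 + φ1 ≤ ψ2 + φ2 := by
    by_contra hcon
    push_neg at hcon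
    have h1 : 0 < (σX^2+σY^2)/2 * ((ψ1+φ1) - (ψ2+φ2)) :=
      mul_pos (by linarith) (by linarith)
    have h2 : 0 < κ*σX := mul_pos hκ hσX
    linarith
  have hd23 : (σX^2+σY^2)/2 * ((ψ2+φ2) - (ψ3+φ3)) = -(2*κ*σY) := by
    linear_combination hsum2 - hsum3
  have hs23 : (ψ2-1) + (φ2-1) ≤ (ψ3-1) + (φ3-1) := by
    by_contra hcon
    push_neg at hcon
    have h1 : 0 < (σX^2+σY^2)/2 * ((ψ2+φ2) - (ψ3+φ3)) :=
      mul_pos (by linarith) (by linarith)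
    have h2 : 0 < κ*σY := mul_pos hκ hσY
    linarith
  -- facts about l
  have hRden : 0 < φ2 * (1 - ψ2) := mul_pos_of_neg_of_neg hφ2n (by linarith)
  have hRpos : 0 < ψ2 * (1 - φ2) / (φ2 * (1 - ψ2)) := by
    exact div_pos (mul_pos (by linarith) (by linarith)) hRden
  have hR1 : 1 < ψ2 * (1 - φ2) / (φ2 * (1 - ψ2)) := by
    rw [lt_div_iff₀ hRden]
    have hkey : ψ2*(1-φ2) - φ2*(1-ψ2) = ψ2 - φ2 := by ring
    linarith
  have hlpos : 0 < l := by
    rw [hl]; exact Real.rpow_pos_of_pos hRpos _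
  have hl1 : 1 < l := by
    rw [hl]
    exact (Real.one_lt_rpow_iff_of_pos hRpos).mpr (Or.inl ⟨hR1, by
      rw [one_div]
      exact inv_pos.mpr (by linarith)⟩)
  have hlpow : l ^ (ψ2 - φ2) = ψ2 * (1 - φ2) / (φ2 * (1 - ψ2)) := by
    rw [hl, ← Real.rpow_mul hRpos.le, one_div, inv_mul_cancel₀ hne2, Real.rpow_one]
  -- exp form of the l-power relation
  have hEl : Real.exp ((ψ2-φ2) * Real.log l) = ψ2*(1-φ2)/(φ2*(1-ψ2)) := by
    rw [← rpow_exp l hlpos (ψ2-φ2)]; exact hlpow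
  have hR2 : Real.exp (ψ2*Real.log l)
      = Real.exp (φ2*Real.log l) * (ψ2*(1-φ2)/(φ2*(1-ψ2))) := by
    rw [← hEl, ← Real.exp_add]; congr 1; ring
  -- pointwise work
  intro z hz
  have hzc : 0 < z/c := div_pos hz hc
  have hlc : 0 < l*c := mul_pos hlpos hc
  have hzlc : 0 < z/(l*c) := div_pos hz hlc
  have hord1' : φ1 < ψ1 := by linarith
  have hord2' : φ2 < ψ2 := by linarith
  have hordb2 : φ2 - 1 < ψ2 - 1 := by linarith
  have hordb3 : φ3 - 1 < ψ3 - 1 := by linarith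
  -- exponential representations
  have e1 : H1 z = (ψ1 * Real.exp (φ1*Real.log (z/c)) - φ1 * Real.exp (ψ1*Real.log (z/c)))/(ψ1-φ1) := by
    simp only [hH1]
    rw [rpow_exp _ hzc φ1, rpow_exp _ hzc ψ1]
    ring
  have e2 : H2 z = (ψ2 * Real.exp (φ2*Real.log (z/c)) - φ2 * Real.exp (ψ2*Real.log (z/c)))/(ψ2-φ2) := by
    simp only [hH2]
    rw [rpow_exp _ hzc φ2, rpow_exp _ hzc ψ2]
    ring
  have hxy : Real.log (z/c) = Real.log (z/(l*c)) + Real.log l := by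
    rw [← Real.log_mul (ne_of_gt hzlc) (ne_of_gt hlpos)]
    congr 1
    field_simp
  have r2 : H2 z = (ψ2/(ψ2-1) * Real.exp (φ2*Real.log l)) * Real.exp (Real.log (z/(l*c))) *
      (((ψ2-1) * Real.exp ((φ2-1)*Real.log (z/(l*c))) - (φ2-1) * Real.exp ((ψ2-1)*Real.log (z/(l*c))))
        /((ψ2-1)-(φ2-1))) := by
    rw [e2, hxy]
    exact shift_id ψ2 φ2 (Real.log l) (Real.log (z/(l*c))) hφ2n hψ2p hR2
  have r3 : H3 z = (ψ2/(ψ2-1) * Real.exp (φ2*Real.log l)) * Real.exp (Real.log (z/(l*c))) *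
      (((ψ3-1) * Real.exp ((φ3-1)*Real.log (z/(l*c))) - (φ3-1) * Real.exp ((ψ3-1)*Real.log (z/(l*c))))
        /((ψ3-1)-(φ3-1))) := by
    simp only [hH3]
    rw [rpow_exp _ hzlc ψ3, rpow_exp _ hzlc φ3, rpow_exp l hlpos φ2]
    rw [mul_assoc, unshift_id ψ3 φ3 (Real.log (z/(l*c))) (by linarith)]
    ring
  have hKpos : (0:ℝ) ≤ (ψ2/(ψ2-1) * Real.exp (φ2*Real.log l)) * Real.exp (Real.log (z/(l*c))) := by
    have : (0:ℝ) < ψ2/(ψ2-1) := div_pos (by linarith) (by linarith)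
    positivity
  -- the three comparisons
  have cmp12le : c ≤ z → H1 z ≤ H2 z := by
    intro hcz
    have hx : 0 ≤ Real.log (z/c) := Real.log_nonneg ((one_le_div hc).mpr hcz)
    rw [e1, e2]
    exact pair_le p _ ψ1 φ1 ψ2 φ2 hp hprod1 hprod2 hord1' hord2' hs12 hx
  have cmp12ge : z ≤ c → H2 z ≤ H1 z := by
    intro hcz
    have hx : Real.log (z/c) ≤ 0 := Real.log_nonpos (le_of_lt hzc) ((div_le_one hc).mpr hcz)
    rw [e1, e2]
    exact pair_ge p _ ψ1 φ1 ψ2 φ2 hp hprod1 hprod2 hord1' hord2' hs12 hx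
  have cmp23le : l*c ≤ z → H2 z ≤ H3 z := by
    intro hcz
    have hy : 0 ≤ Real.log (z/(l*c)) := Real.log_nonneg ((one_le_div hlc).mpr hcz)
    rw [r2, r3]
    exact mul_le_mul_of_nonneg_left
      (pair_le q _ (ψ2-1) (φ2-1) (ψ3-1) (φ3-1) hq hprodb2 hprodb3 hordb2 hordb3 hs23 hy) hKpos
  have cmp23ge : z ≤ l*c → H3 z ≤ H2 z := by
    intro hcz
    have hy : Real.log (z/(l*c)) ≤ 0 := Real.log_nonpos (le_of_lt hzlc) ((div_le_one hlc).mpr hcz)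
    rw [r2, r3]
    exact mul_le_mul_of_nonneg_left
      (pair_ge q _ (ψ2-1) (φ2-1) (ψ3-1) (φ3-1) hq hprodb2 hprodb3 hordb2 hordb3 hs23 hy) hKpos
  -- assemble
  have hclc : c ≤ l*c := le_mul_of_one_le_left hc.le hl1.le
  simp only [hh]
  split_ifs with hif1 hif2
  · have h21 : H2 z ≤ H1 z := cmp12ge hif1
    have h31 : H3 z ≤ H1 z := le_trans (cmp23ge (le_trans hif1 hclc)) h21
    exact (max_eq_left (max_le h21 h31)).symm
  · push_neg at hif1
    have h12 : H1 z ≤ H2 z := cmp12le (le_of_lt hif1)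
    have h32 : H3 z ≤ H2 z := cmp23ge hif2
    rw [max_eq_left h32, max_eq_right h12]
  · push_neg at hif1 hif2
    have h23 : H2 z ≤ H3 z := cmp23le (le_of_lt hif2)
    have h13 : H1 z ≤ H3 z := le_trans (cmp12le (le_of_lt hif1)) h23
    rw [max_eq_right h23, max_eq_right h13]
end

section
/- Let ψ > 1 and 0 < K < L be real numbers. Then the function z ↦ (z − K)⁺ / z^ψ on (0, L] attains its maximum exactly at the point z₁* = min(ψK/(ψ − 1), L); that is, z₁* is the unique maximizer of (z − K)⁺ z^{−ψ} over (0, L]. -/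
/-!
On `(K, ∞)` the positive part is inactive and `(z - K) z^{-ψ}` has derivative
`z^{-ψ-1} (ψK - (ψ - 1) z)`, so it increases up to the critical point `ψK/(ψ - 1)` and
decreases afterwards; on `(0, K]` the objective is `0`. Hence the maximizer over `(0, L]`
is the critical point when it lies in the interval and the endpoint `L` otherwise.
-/

open Real

section ShiftedPowerRatio

variable {ψ K : ℝ}

theorem hasDerivAt_sub_mul_rpow_neg {z : ℝ} (hz : 0 < z) :
    HasDerivAt (fun z : ℝ => (z - K) * z ^ (-ψ))
      (z ^ (-ψ - 1) * (ψ * K - (ψ - 1) * z)) z := by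
  have hpow : z ^ (-ψ) = z * z ^ (-ψ - 1) := by
    rw [rpow_sub_one hz.ne', mul_div_cancel₀ _ hz.ne']
  refine (((hasDerivAt_id z).sub_const K).mul
    (hasDerivAt_rpow_const (Or.inl hz.ne'))).congr_deriv ?_
  rw [hpow, id]
  ring

theorem strictMonoOn_sub_mul_rpow_neg (hψ : 1 < ψ) :
    StrictMonoOn (fun z : ℝ => (z - K) * z ^ (-ψ)) (Set.Ioc 0 (ψ * K / (ψ - 1))) := by
  have hψ1 : 0 < ψ - 1 := sub_pos.2 hψ
  refine strictMonoOn_of_deriv_pos (convex_Ioc _ _)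
    (fun z hz => (hasDerivAt_sub_mul_rpow_neg hz.1).continuousAt.continuousWithinAt) ?_
  intro z hz
  rw [interior_Ioc] at hz
  rw [(hasDerivAt_sub_mul_rpow_neg hz.1).deriv]
  have hcrit : (ψ - 1) * z < ψ * K := by
    have := hz.2
    rwa [lt_div_iff₀ hψ1, mul_comm] at this
  exact mul_pos (rpow_pos_of_pos hz.1 _) (sub_pos.2 hcrit)

theorem strictAntiOn_sub_mul_rpow_neg (hψ : 1 < ψ) (hK : 0 < K) :
    StrictAntiOn (fun z : ℝ => (z - K) * z ^ (-ψ)) (Set.Ici (ψ * K / (ψ - 1))) := by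
  have hψ1 : 0 < ψ - 1 := sub_pos.2 hψ
  have hcrit_pos : 0 < ψ * K / (ψ - 1) := div_pos (mul_pos (by linarith) hK) hψ1
  refine strictAntiOn_of_deriv_neg (convex_Ici _)
    (fun z hz => (hasDerivAt_sub_mul_rpow_neg
      (hcrit_pos.trans_le hz)).continuousAt.continuousWithinAt) ?_
  intro z hz
  rw [interior_Ici] at hz
  have hz0 : 0 < z := hcrit_pos.trans hz
  rw [(hasDerivAt_sub_mul_rpow_neg hz0).deriv]
  have hcrit : ψ * K < (ψ - 1) * z := by
    have : ψ * K / (ψ - 1) < z := hz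
    rwa [div_lt_iff₀ hψ1, mul_comm z] at this
  exact mul_neg_of_pos_of_neg (rpow_pos_of_pos hz0 _) (sub_neg.2 hcrit)

theorem lt_mul_div_sub_one (hψ : 1 < ψ) (hK : 0 < K) : K < ψ * K / (ψ - 1) := by
  rw [lt_div_iff₀ (sub_pos.2 hψ)]
  linarith

theorem max_sub_zero_div_rpow {z : ℝ} (hz : 0 ≤ z) (hKz : K ≤ z) :
    max (z - K) 0 / z ^ ψ = (z - K) * z ^ (-ψ) := by
  rw [max_eq_left (sub_nonneg.2 hKz), div_eq_mul_inv, rpow_neg hz]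

end ShiftedPowerRatio

/-- For `ψ > 1` and `0 < K < L`, the function
`z ↦ (z − K)⁺ / z^ψ` on `(0, L]` attains its maximum exactly at
`z₁* = min(ψK/(ψ − 1), L)`, which is the unique maximizer. -/
theorem compound_lower_boundary (ψ K L : ℝ) (hψ : 1 < ψ) (hK : 0 < K) (hKL : K < L)
    (z₁ : ℝ) (hz₁ : z₁ = min (ψ * K / (ψ - 1)) L) :
    z₁ ∈ Set.Ioc (0 : ℝ) L ∧
    ∀ z ∈ Set.Ioc (0 : ℝ) L, z ≠ z₁ →
      max (z - K) 0 / z ^ ψ < max (z₁ - K) 0 / z₁ ^ ψ := by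
  have hKz₁ : K < z₁ := hz₁ ▸ lt_min (lt_mul_div_sub_one hψ hK) hKL
  have hz₁0 : 0 < z₁ := hK.trans hKz₁
  have hz₁crit : z₁ ≤ ψ * K / (ψ - 1) := hz₁ ▸ min_le_left _ _
  refine ⟨⟨hz₁0, hz₁ ▸ min_le_right _ _⟩, ?_⟩
  rintro z ⟨hz0, hzL⟩ hne
  rw [max_sub_zero_div_rpow hz₁0.le hKz₁.le]
  rcases le_or_gt z K with hzK | hKz
  · rw [max_eq_right (sub_nonpos.2 hzK), zero_div]
    exact mul_pos (sub_pos.2 hKz₁) (rpow_pos_of_pos hz₁0 _)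
  rw [max_sub_zero_div_rpow hz0.le hKz.le]
  rcases hne.lt_or_gt with hlt | hgt
  · exact strictMonoOn_sub_mul_rpow_neg hψ ⟨hz0, hlt.le.trans hz₁crit⟩ ⟨hz₁0, hz₁crit⟩ hlt
  · have hcrit_lt : ψ * K / (ψ - 1) < L :=
      (min_lt_iff.1 (hz₁ ▸ hgt.trans_le hzL)).resolve_right (lt_irrefl L)
    have hcrit_le : ψ * K / (ψ - 1) ≤ z₁ := hz₁ ▸ le_min le_rfl hcrit_lt.le
    exact strictAntiOn_sub_mul_rpow_neg hψ hK hcrit_le (hcrit_le.trans hgt.le) hgt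
end

section
/- Fix μ_X, μ_Y ∈ ℝ, σ_X, σ_Y > 0 and r ∈ ℝ. For κ > 0 with r > μ_X − κσ_X, let ψ(κ) denote the larger root of Q₃(a; κ) = (1/2)Σ²a(a−1) + (μ_X − μ_Y − κ(σ_X + σ_Y))a + μ_Y + κσ_Y − r, and for κ > 0 with r > μ_Y − κσ_Y, let φ₋(κ) denote the smaller root of Q₁(a; κ) = (1/2)Σ²a(a−1) + (μ_X − μ_Y + κ(σ_X + σ_Y))a + μ_Y − κσ_Y − r. Then κ ↦ ψ(κ) is strictly increasing on the interval {κ > 0 : r > μ_X − κσ_X}, and κ ↦ φ₋(κ) is strictly decreasing on the interval {κ > 0 : r > μ_Y − κσ_Y}. -/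
/-!
Scaled by `2 / Σ²`, each of `Q₃(·; κ)` and `Q₁(·; κ)` becomes a monic quadratic `a² - 2 b a - c`,
whose roots are `b ± √(b² + c)`, and any point where it is negative lies strictly between them.
Since `Q₃(1; κ) = μX - κσX - r < 0`, the larger root satisfies `ψ(κ) > 1`, and there
`∂Q₃/∂κ = σY - (σX + σY) a < 0`; hence `Q₃(ψ(κ₁); κ₂) < 0` for `κ₁ < κ₂`, i.e. `ψ(κ₁) < ψ(κ₂)`.
Symmetrically `Q₁(0; κ) = μY - κσY - r < 0` gives `φ₋(κ) < 0`, where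
`∂Q₁/∂κ = (σX + σY) a - σY < 0`, so `φ₋(κ₂) < φ₋(κ₁)`.
-/

section MonicQuadratic

variable {b c t : ℝ}

theorem abs_sub_lt_sqrt_of_quadratic_neg (h : t ^ 2 - 2 * b * t - c < 0) :
    |t - b| < √(b ^ 2 + c) :=
  (Real.lt_sqrt (abs_nonneg _)).2 (by rw [sq_abs]; linear_combination h)

theorem lt_add_sqrt_of_quadratic_neg (h : t ^ 2 - 2 * b * t - c < 0) :
    t < b + √(b ^ 2 + c) := by
  linarith [(abs_lt.1 (abs_sub_lt_sqrt_of_quadratic_neg h)).2]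

theorem sub_sqrt_lt_of_quadratic_neg (h : t ^ 2 - 2 * b * t - c < 0) :
    b - √(b ^ 2 + c) < t := by
  linarith [(abs_lt.1 (abs_sub_lt_sqrt_of_quadratic_neg h)).1]

theorem sq_add_nonneg_of_quadratic_neg (h : t ^ 2 - 2 * b * t - c < 0) : 0 ≤ b ^ 2 + c := by
  nlinarith [sq_nonneg (t - b)]

theorem quadratic_add_sqrt_eq_zero (hd : 0 ≤ b ^ 2 + c) :
    (b + √(b ^ 2 + c)) ^ 2 - 2 * b * (b + √(b ^ 2 + c)) - c = 0 := by
  linear_combination Real.sq_sqrt hd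

theorem quadratic_sub_sqrt_eq_zero (hd : 0 ≤ b ^ 2 + c) :
    (b - √(b ^ 2 + c)) ^ 2 - 2 * b * (b - √(b ^ 2 + c)) - c = 0 := by
  linear_combination Real.sq_sqrt hd

end MonicQuadratic

noncomputable section

namespace AmbiguityRoots

variable (μX μY σX σY r : ℝ)

def Q₃ (κ a : ℝ) : ℝ :=
  (σX ^ 2 + σY ^ 2) / 2 * a * (a - 1) + (μX - μY - κ * (σX + σY)) * a + μY + κ * σY - r

def Q₁ (κ a : ℝ) : ℝ :=
  (σX ^ 2 + σY ^ 2) / 2 * a * (a - 1) + (μX - μY + κ * (σX + σY)) * a + μY - κ * σY - r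

def b₃ (κ : ℝ) : ℝ := 1 / 2 - (μX - μY - κ * (σX + σY)) / (σX ^ 2 + σY ^ 2)

def c₃ (κ : ℝ) : ℝ := 2 * (r - μY - κ * σY) / (σX ^ 2 + σY ^ 2)

def b₁ (κ : ℝ) : ℝ := 1 / 2 - (μX - μY + κ * (σX + σY)) / (σX ^ 2 + σY ^ 2)

def c₁ (κ : ℝ) : ℝ := 2 * (r - μY + κ * σY) / (σX ^ 2 + σY ^ 2)

def psi (κ : ℝ) : ℝ := b₃ μX μY σX σY κ + √(b₃ μX μY σX σY κ ^ 2 + c₃ μY σX σY r κ)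

def phiMinus (κ : ℝ) : ℝ := b₁ μX μY σX σY κ - √(b₁ μX μY σX σY κ ^ 2 + c₁ μY σX σY r κ)

variable {μX μY σX σY r} {κ κ₁ κ₂ a : ℝ}

theorem Q₃_eq (hS : σX ^ 2 + σY ^ 2 ≠ 0) :
    Q₃ μX μY σX σY r κ a = (σX ^ 2 + σY ^ 2) / 2 *
      (a ^ 2 - 2 * b₃ μX μY σX σY κ * a - c₃ μY σX σY r κ) := by
  unfold Q₃ b₃ c₃
  field_simp
  ring

theorem Q₁_eq (hS : σX ^ 2 + σY ^ 2 ≠ 0) :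
    Q₁ μX μY σX σY r κ a = (σX ^ 2 + σY ^ 2) / 2 *
      (a ^ 2 - 2 * b₁ μX μY σX σY κ * a - c₁ μY σX σY r κ) := by
  unfold Q₁ b₁ c₁
  field_simp
  ring

theorem Q₃_sub_Q₃ :
    Q₃ μX μY σX σY r κ₂ a - Q₃ μX μY σX σY r κ₁ a = (κ₂ - κ₁) * (σY - (σX + σY) * a) := by
  unfold Q₃
  ring

theorem Q₁_sub_Q₁ :
    Q₁ μX μY σX σY r κ₂ a - Q₁ μX μY σX σY r κ₁ a = (κ₂ - κ₁) * ((σX + σY) * a - σY) := by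
  unfold Q₁
  ring

theorem Q₃_one_neg (hr : μX - κ * σX < r) : Q₃ μX μY σX σY r κ 1 < 0 := by
  unfold Q₃
  linarith

theorem Q₁_zero_neg (hr : μY - κ * σY < r) : Q₁ μX μY σX σY r κ 0 < 0 := by
  unfold Q₁
  linarith

section

variable (hS : 0 < σX ^ 2 + σY ^ 2)
include hS

theorem quadratic_neg_of_Q₃_neg (h : Q₃ μX μY σX σY r κ a < 0) :
    a ^ 2 - 2 * b₃ μX μY σX σY κ * a - c₃ μY σX σY r κ < 0 :=
  neg_of_mul_neg_right (Q₃_eq hS.ne' ▸ h) (by positivity)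

theorem quadratic_neg_of_Q₁_neg (h : Q₁ μX μY σX σY r κ a < 0) :
    a ^ 2 - 2 * b₁ μX μY σX σY κ * a - c₁ μY σX σY r κ < 0 :=
  neg_of_mul_neg_right (Q₁_eq hS.ne' ▸ h) (by positivity)

theorem one_lt_psi (hr : μX - κ * σX < r) : 1 < psi μX μY σX σY r κ :=
  lt_add_sqrt_of_quadratic_neg (quadratic_neg_of_Q₃_neg hS (Q₃_one_neg hr))

theorem phiMinus_neg (hr : μY - κ * σY < r) : phiMinus μX μY σX σY r κ < 0 :=
  sub_sqrt_lt_of_quadratic_neg (quadratic_neg_of_Q₁_neg hS (Q₁_zero_neg hr))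

theorem Q₃_psi (hr : μX - κ * σX < r) : Q₃ μX μY σX σY r κ (psi μX μY σX σY r κ) = 0 := by
  rw [Q₃_eq hS.ne', psi, quadratic_add_sqrt_eq_zero, mul_zero]
  exact sq_add_nonneg_of_quadratic_neg (quadratic_neg_of_Q₃_neg hS (Q₃_one_neg hr))

theorem Q₁_phiMinus (hr : μY - κ * σY < r) :
    Q₁ μX μY σX σY r κ (phiMinus μX μY σX σY r κ) = 0 := by
  rw [Q₁_eq hS.ne', phiMinus, quadratic_sub_sqrt_eq_zero, mul_zero]
  exact sq_add_nonneg_of_quadratic_neg (quadratic_neg_of_Q₁_neg hS (Q₁_zero_neg hr))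

end

theorem strictMonoOn_psi (hσX : 0 < σX) (hσY : 0 < σY) :
    StrictMonoOn (psi μX μY σX σY r) {κ : ℝ | 0 < κ ∧ μX - κ * σX < r} := by
  intro κ₁ ⟨_, hr₁⟩ κ₂ _ hκ
  have hS : 0 < σX ^ 2 + σY ^ 2 := by positivity
  set x := psi μX μY σX σY r κ₁
  have hx : 1 < x := one_lt_psi hS hr₁
  have hQ : Q₃ μX μY σX σY r κ₂ x < 0 :=
    calc Q₃ μX μY σX σY r κ₂ x = Q₃ μX μY σX σY r κ₂ x - Q₃ μX μY σX σY r κ₁ x := by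
          rw [Q₃_psi hS hr₁, sub_zero]
      _ = _ := Q₃_sub_Q₃
      _ < 0 := mul_neg_of_pos_of_neg (sub_pos.2 hκ) (by nlinarith)
  exact lt_add_sqrt_of_quadratic_neg (quadratic_neg_of_Q₃_neg hS hQ)

theorem strictAntiOn_phiMinus (hσX : 0 < σX) (hσY : 0 < σY) :
    StrictAntiOn (phiMinus μX μY σX σY r) {κ : ℝ | 0 < κ ∧ μY - κ * σY < r} := by
  intro κ₁ ⟨_, hr₁⟩ κ₂ _ hκ
  have hS : 0 < σX ^ 2 + σY ^ 2 := by positivity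
  set x := phiMinus μX μY σX σY r κ₁
  have hx : x < 0 := phiMinus_neg hS hr₁
  have hQ : Q₁ μX μY σX σY r κ₂ x < 0 :=
    calc Q₁ μX μY σX σY r κ₂ x = Q₁ μX μY σX σY r κ₂ x - Q₁ μX μY σX σY r κ₁ x := by
          rw [Q₁_phiMinus hS hr₁, sub_zero]
      _ = _ := Q₁_sub_Q₁
      _ < 0 := mul_neg_of_pos_of_neg (sub_pos.2 hκ) (by nlinarith)
  exact sub_sqrt_lt_of_quadratic_neg (quadratic_neg_of_Q₁_neg hS hQ)

end AmbiguityRoots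

end

open AmbiguityRoots in
/-- With `ψ(κ)` the larger root of `Q₃(·; κ)` and `φ₋(κ)` the smaller
root of `Q₁(·; κ)` (given by the explicit formulas), `κ ↦ ψ(κ)` is strictly
increasing on `{κ > 0 : r > μX − κσX}` and `κ ↦ φ₋(κ)` is strictly decreasing on
`{κ > 0 : r > μY − κσY}`. -/
theorem roots_monotone_in_ambiguity (μX μY σX σY r : ℝ)
    (hσX : 0 < σX) (hσY : 0 < σY) :
    let S2 : ℝ := σX ^ 2 + σY ^ 2
    let ψ : ℝ → ℝ := fun κ => 1 / 2 - (μX - μY - κ * (σX + σY)) / S2 +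
      Real.sqrt ((1 / 2 - (μX - μY - κ * (σX + σY)) / S2) ^ 2 +
        2 * (r - μY - κ * σY) / S2)
    let φ : ℝ → ℝ := fun κ => 1 / 2 - (μX - μY + κ * (σX + σY)) / S2 -
      Real.sqrt ((1 / 2 - (μX - μY + κ * (σX + σY)) / S2) ^ 2 +
        2 * (r - μY + κ * σY) / S2)
    StrictMonoOn ψ {κ : ℝ | 0 < κ ∧ μX - κ * σX < r} ∧
    StrictAntiOn φ {κ : ℝ | 0 < κ ∧ μY - κ * σY < r} :=
  ⟨strictMonoOn_psi hσX hσY, strictAntiOn_phiMinus hσX hσY⟩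
end

section
/- Fix μ_X, μ_Y ∈ ℝ, σ_X, σ_Y > 0, r ∈ ℝ and 0 < K < M. With ψ(κ) the larger root of Q₃(a; κ) = (1/2)Σ²a(a−1) + (μ_X − μ_Y − κ(σ_X + σ_Y))a + μ_Y + κσ_Y − r (defined for κ large enough that r > μ_X − κσ_X) and φ₋(κ) the smaller root of Q₁(a; κ) = (1/2)Σ²a(a−1) + (μ_X − μ_Y + κ(σ_X + σ_Y))a + μ_Y − κσ_Y − r (defined for κ large enough that r > μ_Y − κσ_Y), one has ψ(κ) → +∞ and φ₋(κ) → −∞ as κ → ∞. Consequently the compound option exercise boundaries converge to the Marshallian rule: ψ(κ)K/(ψ(κ) − 1) → K and φ₋(κ)M/(φ₋(κ) − 1) → M as κ → ∞. -/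
open Real Filter Bornology

lemma tendsto_mul_div_sub_one_cobounded (C : ℝ) :
    Tendsto (fun x : ℝ => x * C / (x - 1)) (cobounded ℝ) (nhds C) := by
  -- away from `0` and `1`, `x * C / (x - 1) = C / (1 - x⁻¹)`
  have hlim : Tendsto (fun x : ℝ => C / (1 - x⁻¹)) (cobounded ℝ) (nhds (C / (1 - 0))) :=
    tendsto_const_nhds.div (tendsto_const_nhds.sub tendsto_inv₀_cobounded) (by norm_num)
  rw [sub_zero, div_one] at hlim
  refine hlim.congr' ?_
  filter_upwards [eventually_ne_cobounded 0, eventually_ne_cobounded 1] with x hx0 hx1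
  have hx1' : x - 1 ≠ 0 := sub_ne_zero.mpr hx1
  field_simp

lemma tendsto_const_sub_sub_mul_div_atTop {S c : ℝ} (hS : 0 < S) (hc : 0 < c) (a b : ℝ) :
    Tendsto (fun κ : ℝ => b - (a - κ * c) / S) atTop atTop := by
  refine (tendsto_atTop_add_const_right _ (b - a / S)
    (tendsto_id.const_mul_atTop (div_pos hc hS))).congr fun κ => ?_
  simp only [id]
  ring

lemma tendsto_const_sub_add_mul_div_atBot {S c : ℝ} (hS : 0 < S) (hc : 0 < c) (a b : ℝ) :
    Tendsto (fun κ : ℝ => b - (a + κ * c) / S) atTop atBot := by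
  refine (tendsto_atBot_add_const_right _ (b - a / S)
    (tendsto_id.const_mul_atTop_of_neg (neg_neg_of_pos (div_pos hc hS)))).congr fun κ => ?_
  simp only [id]
  ring

theorem marshallian_limit_general (μX μY σX σY r K M : ℝ)
    (hσX : 0 < σX) (hσY : 0 < σY) :
    let S2 : ℝ := σX ^ 2 + σY ^ 2
    let ψ : ℝ → ℝ := fun κ => 1 / 2 - (μX - μY - κ * (σX + σY)) / S2 +
      Real.sqrt ((1 / 2 - (μX - μY - κ * (σX + σY)) / S2) ^ 2 +
        2 * (r - μY - κ * σY) / S2)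
    let φ : ℝ → ℝ := fun κ => 1 / 2 - (μX - μY + κ * (σX + σY)) / S2 -
      Real.sqrt ((1 / 2 - (μX - μY + κ * (σX + σY)) / S2) ^ 2 +
        2 * (r - μY + κ * σY) / S2)
    Tendsto ψ atTop atTop ∧ Tendsto φ atTop atBot ∧
    Tendsto (fun κ => ψ κ * K / (ψ κ - 1)) atTop (nhds K) ∧
    Tendsto (fun κ => φ κ * M / (φ κ - 1)) atTop (nhds M) := by
  intro S2 ψ φ
  have hS2 : 0 < S2 := by positivity
  have hσ : 0 < σX + σY := by positivity
  -- The square roots only push `ψ` up and `φ` down from their linear parts.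
  have hψ : Tendsto ψ atTop atTop :=
    tendsto_atTop_mono (fun _ => le_add_of_nonneg_right (sqrt_nonneg _))
      (tendsto_const_sub_sub_mul_div_atTop hS2 hσ _ _)
  have hφ : Tendsto φ atTop atBot :=
    tendsto_atBot_mono (fun _ => sub_le_self _ (sqrt_nonneg _))
      (tendsto_const_sub_add_mul_div_atBot hS2 hσ _ _)
  refine ⟨hψ, hφ, ?_, ?_⟩
  · exact (tendsto_mul_div_sub_one_cobounded K).comp
      (hψ.mono_right IsOrderBornology.atTop_le_cobounded)
  · exact (tendsto_mul_div_sub_one_cobounded M).comp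
      (hφ.mono_right IsOrderBornology.atBot_le_cobounded)

/-- With `ψ(κ)` the larger root of `Q₃(·; κ)` and `φ₋(κ)` the smaller
root of `Q₁(·; κ)` (explicit formulas), `ψ(κ) → +∞` and `φ₋(κ) → −∞` as `κ → ∞`;
consequently the compound option boundaries converge to the Marshallian rule:
`ψ(κ)K/(ψ(κ) − 1) → K` and `φ₋(κ)M/(φ₋(κ) − 1) → M`. -/
theorem marshallian_limit (μX μY σX σY r K M : ℝ)
    (hσX : 0 < σX) (hσY : 0 < σY) (hK : 0 < K) (hKM : K < M) :
    let S2 : ℝ := σX ^ 2 + σY ^ 2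
    let ψ : ℝ → ℝ := fun κ => 1 / 2 - (μX - μY - κ * (σX + σY)) / S2 +
      Real.sqrt ((1 / 2 - (μX - μY - κ * (σX + σY)) / S2) ^ 2 +
        2 * (r - μY - κ * σY) / S2)
    let φ : ℝ → ℝ := fun κ => 1 / 2 - (μX - μY + κ * (σX + σY)) / S2 -
      Real.sqrt ((1 / 2 - (μX - μY + κ * (σX + σY)) / S2) ^ 2 +
        2 * (r - μY + κ * σY) / S2)
    Tendsto ψ atTop atTop ∧ Tendsto φ atTop atBot ∧
    Tendsto (fun κ => ψ κ * K / (ψ κ - 1)) atTop (nhds K) ∧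
    Tendsto (fun κ => φ κ * M / (φ κ - 1)) atTop (nhds M) :=
  marshallian_limit_general μX μY σX σY r K M hσX hσY
end

section
/- Fix μ_X, μ_Y ∈ ℝ, σ_X > 0, κ > 0 and r ∈ ℝ. For σ_Y > 0 with r > μ_X − κσ_X, let ψ(σ_Y) > φ(σ_Y) denote the two real roots of Q₃(a; σ_Y) = (1/2)(σ_X² + σ_Y²)a(a−1) + (μ_X − μ_Y − κ(σ_X + σ_Y))a + μ_Y + κσ_Y − r. Then the map σ_Y ↦ ψ(σ_Y) is differentiable on (0, ∞) with derivative ∂ψ/∂σ_Y = 2(κ − σ_Y ψ)(ψ − 1) / ((σ_X² + σ_Y²)(ψ − φ)). Similarly, regarding the larger root as a function of σ_X (with σ_Y fixed), ∂ψ/∂σ_X = 2ψ(κ − σ_X(ψ − 1)) / ((σ_X² + σ_Y²)(ψ − φ)). -/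
open Real

set_option maxHeartbeats 1000000

lemma aux1 (μX μY κ r σX σY P Q : ℝ) (hκ : 0 < κ) (hX : 0 < σX) (hY : 0 < σY)
    (hr : μX - κ * σX < r)
    (hP : P = 1 / 2 - (μX - μY - κ * (σX + σY)) / (σX ^ 2 + σY ^ 2) +
      Real.sqrt ((1 / 2 - (μX - μY - κ * (σX + σY)) / (σX ^ 2 + σY ^ 2)) ^ 2 +
        2 * (r - μY - κ * σY) / (σX ^ 2 + σY ^ 2)))
    (hQ : Q = 1 / 2 - (μX - μY - κ * (σX + σY)) / (σX ^ 2 + σY ^ 2) -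
      Real.sqrt ((1 / 2 - (μX - μY - κ * (σX + σY)) / (σX ^ 2 + σY ^ 2)) ^ 2 +
        2 * (r - μY - κ * σY) / (σX ^ 2 + σY ^ 2))) :
    HasDerivAt (fun s => 1 / 2 - (μX - μY - κ * (σX + s)) / (σX ^ 2 + s ^ 2) +
      Real.sqrt ((1 / 2 - (μX - μY - κ * (σX + s)) / (σX ^ 2 + s ^ 2)) ^ 2 +
        2 * (r - μY - κ * s) / (σX ^ 2 + s ^ 2)))
      (2 * (κ - σY * P) * (P - 1) / ((σX ^ 2 + σY ^ 2) * (P - Q))) σY := by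
  have hS0 : (0:ℝ) < σX ^ 2 + σY ^ 2 := by positivity
  have hS : (σX ^ 2 + σY ^ 2) ≠ 0 := ne_of_gt hS0
  have hnum1 : HasDerivAt (fun s : ℝ => μX - μY - κ * (σX + s)) (-κ) σY := by
    have h := (((hasDerivAt_id σY).const_add σX).const_mul κ).const_sub (μX - μY)
    simpa using h
  have hden : HasDerivAt (fun s : ℝ => σX ^ 2 + s ^ 2) (2 * σY) σY := by
    simpa using (hasDerivAt_pow 2 σY).const_add (σX ^ 2)
  have hfrac := hnum1.div hden hS
  have hB := hfrac.const_sub (1/2 : ℝ)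
  have h2a : HasDerivAt (fun s : ℝ => κ * s) κ σY := by
    simpa using (hasDerivAt_id σY).const_mul κ
  have h2b := (h2a.const_sub (r - μY)).const_mul 2
  have hC := h2b.div hden hS
  have hD := (hB.pow 2).add hC
  have hDpos : 0 < (1 / 2 - (μX - μY - κ * (σX + σY)) / (σX ^ 2 + σY ^ 2)) ^ 2 +
        2 * (r - μY - κ * σY) / (σX ^ 2 + σY ^ 2) := by
    have h1 : (1 / 2 - (μX - μY - κ * (σX + σY)) / (σX ^ 2 + σY ^ 2)) ^ 2 +
        2 * (r - μY - κ * σY) / (σX ^ 2 + σY ^ 2) =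
        (1 / 2 + (μX - μY - κ * (σX + σY)) / (σX ^ 2 + σY ^ 2)) ^ 2 +
        2 * (r - μX + κ * σX) / (σX ^ 2 + σY ^ 2) := by
      field_simp
      ring
    rw [h1]
    exact add_pos_of_nonneg_of_pos (sq_nonneg _) (div_pos (by linarith) hS0)
  have hsq := hD.sqrt (ne_of_gt hDpos)
  have hfull := hB.add hsq
  refine hfull.congr_deriv ?_
  subst hP hQ
  set t := Real.sqrt ((1 / 2 - (μX - μY - κ * (σX + σY)) / (σX ^ 2 + σY ^ 2)) ^ 2 +
        2 * (r - μY - κ * σY) / (σX ^ 2 + σY ^ 2)) with ht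
  have ht0 : (0:ℝ) < t := Real.sqrt_pos.mpr hDpos
  have ht2 : t ^ 2 = (1 / 2 - (μX - μY - κ * (σX + σY)) / (σX ^ 2 + σY ^ 2)) ^ 2 +
      2 * (r - μY - κ * σY) / (σX ^ 2 + σY ^ 2) := Real.sq_sqrt hDpos.le
  field_simp at ht2
  have hQ3 : (σX ^ 2 + σY ^ 2) * ((σX ^ 2 + σY ^ 2 - 2 * (μX - μY - κ * (σX + σY)) + 2 * t * (σX ^ 2 + σY ^ 2)) ^ 2
      - 2 * (σX ^ 2 + σY ^ 2) * (σX ^ 2 + σY ^ 2 - 2 * (μX - μY - κ * (σX + σY)) + 2 * t * (σX ^ 2 + σY ^ 2))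
      + 4 * (μX - μY - κ * (σX + σY)) * (σX ^ 2 + σY ^ 2 - 2 * (μX - μY - κ * (σX + σY)) + 2 * t * (σX ^ 2 + σY ^ 2)))
      + 8 * (σX ^ 2 + σY ^ 2) ^ 2 * (μY + κ * σY - r) = 0 := by
    linear_combination (σX ^ 2 + σY ^ 2) * ht2
  simp only [Pi.div_apply, Pi.add_apply, Pi.pow_apply, Nat.cast_ofNat, show (2:ℕ) - 1 = 1 from rfl, pow_one]
  rw [← ht]
  field_simp
  linear_combination (2*(σX ^ 2 + σY ^ 2)*t*σY) * ht2

lemma aux2 (μX μY κ r σX σY P Q : ℝ) (hκ : 0 < κ) (hX : 0 < σX) (hY : 0 < σY)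
    (hr : μX - κ * σX < r)
    (hP : P = 1 / 2 - (μX - μY - κ * (σX + σY)) / (σX ^ 2 + σY ^ 2) +
      Real.sqrt ((1 / 2 - (μX - μY - κ * (σX + σY)) / (σX ^ 2 + σY ^ 2)) ^ 2 +
        2 * (r - μY - κ * σY) / (σX ^ 2 + σY ^ 2)))
    (hQ : Q = 1 / 2 - (μX - μY - κ * (σX + σY)) / (σX ^ 2 + σY ^ 2) -
      Real.sqrt ((1 / 2 - (μX - μY - κ * (σX + σY)) / (σX ^ 2 + σY ^ 2)) ^ 2 +
        2 * (r - μY - κ * σY) / (σX ^ 2 + σY ^ 2))) :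
    HasDerivAt (fun s => 1 / 2 - (μX - μY - κ * (s + σY)) / (s ^ 2 + σY ^ 2) +
      Real.sqrt ((1 / 2 - (μX - μY - κ * (s + σY)) / (s ^ 2 + σY ^ 2)) ^ 2 +
        2 * (r - μY - κ * σY) / (s ^ 2 + σY ^ 2)))
      (2 * P * (κ - σX * (P - 1)) / ((σX ^ 2 + σY ^ 2) * (P - Q))) σX := by
  have hS0 : (0:ℝ) < σX ^ 2 + σY ^ 2 := by positivity
  have hS : (σX ^ 2 + σY ^ 2) ≠ 0 := ne_of_gt hS0
  have hnum1 : HasDerivAt (fun s : ℝ => μX - μY - κ * (s + σY)) (-κ) σX := by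
    have h := (((hasDerivAt_id σX).add_const σY).const_mul κ).const_sub (μX - μY)
    simpa using h
  have hden : HasDerivAt (fun s : ℝ => s ^ 2 + σY ^ 2) (2 * σX) σX := by
    simpa using (hasDerivAt_pow 2 σX).add_const (σY ^ 2)
  have hfrac := hnum1.div hden hS
  have hB := hfrac.const_sub (1/2 : ℝ)
  have hC := (hasDerivAt_const σX (2 * (r - μY - κ * σY))).div hden hS
  have hD := (hB.pow 2).add hC
  have hDpos : 0 < (1 / 2 - (μX - μY - κ * (σX + σY)) / (σX ^ 2 + σY ^ 2)) ^ 2 +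
        2 * (r - μY - κ * σY) / (σX ^ 2 + σY ^ 2) := by
    have h1 : (1 / 2 - (μX - μY - κ * (σX + σY)) / (σX ^ 2 + σY ^ 2)) ^ 2 +
        2 * (r - μY - κ * σY) / (σX ^ 2 + σY ^ 2) =
        (1 / 2 + (μX - μY - κ * (σX + σY)) / (σX ^ 2 + σY ^ 2)) ^ 2 +
        2 * (r - μX + κ * σX) / (σX ^ 2 + σY ^ 2) := by
      field_simp
      ring
    rw [h1]
    exact add_pos_of_nonneg_of_pos (sq_nonneg _) (div_pos (by linarith) hS0)
  have hsq := hD.sqrt (ne_of_gt hDpos)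
  have hfull := hB.add hsq
  refine hfull.congr_deriv ?_
  subst hP hQ
  set t := Real.sqrt ((1 / 2 - (μX - μY - κ * (σX + σY)) / (σX ^ 2 + σY ^ 2)) ^ 2 +
        2 * (r - μY - κ * σY) / (σX ^ 2 + σY ^ 2)) with ht
  have ht0 : (0:ℝ) < t := Real.sqrt_pos.mpr hDpos
  have ht2 : t ^ 2 = (1 / 2 - (μX - μY - κ * (σX + σY)) / (σX ^ 2 + σY ^ 2)) ^ 2 +
      2 * (r - μY - κ * σY) / (σX ^ 2 + σY ^ 2) := Real.sq_sqrt hDpos.le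
  field_simp at ht2
  have hQ3 : (σX ^ 2 + σY ^ 2) * ((σX ^ 2 + σY ^ 2 - 2 * (μX - μY - κ * (σX + σY)) + 2 * t * (σX ^ 2 + σY ^ 2)) ^ 2
      - 2 * (σX ^ 2 + σY ^ 2) * (σX ^ 2 + σY ^ 2 - 2 * (μX - μY - κ * (σX + σY)) + 2 * t * (σX ^ 2 + σY ^ 2))
      + 4 * (μX - μY - κ * (σX + σY)) * (σX ^ 2 + σY ^ 2 - 2 * (μX - μY - κ * (σX + σY)) + 2 * t * (σX ^ 2 + σY ^ 2)))
      + 8 * (σX ^ 2 + σY ^ 2) ^ 2 * (μY + κ * σY - r) = 0 := by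
    linear_combination (σX ^ 2 + σY ^ 2) * ht2
  simp only [Pi.div_apply, Pi.add_apply, Pi.pow_apply, Nat.cast_ofNat, show (2:ℕ) - 1 = 1 from rfl, pow_one]
  rw [← ht]
  field_simp
  linear_combination (2*(σX ^ 2 + σY ^ 2)*t*σX) * ht2


/-- Regarding the larger root `ψ` of `Q₃` as a function of `σY`
(resp. of `σX`), given by the explicit root formula (with `φ` the smaller root),
its derivative is `∂ψ/∂σY = 2(κ − σYψ)(ψ − 1)/((σX² + σY²)(ψ − φ))`
(resp. `∂ψ/∂σX = 2ψ(κ − σX(ψ − 1))/((σX² + σY²)(ψ − φ))`). -/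
theorem root_sensitivity_volatility (μX μY κ r : ℝ) (hκ : 0 < κ)
    (Ψ Φ : ℝ → ℝ → ℝ)
    (hΨ : Ψ = fun sX sY => 1 / 2 - (μX - μY - κ * (sX + sY)) / (sX ^ 2 + sY ^ 2) +
      Real.sqrt ((1 / 2 - (μX - μY - κ * (sX + sY)) / (sX ^ 2 + sY ^ 2)) ^ 2 +
        2 * (r - μY - κ * sY) / (sX ^ 2 + sY ^ 2)))
    (hΦ : Φ = fun sX sY => 1 / 2 - (μX - μY - κ * (sX + sY)) / (sX ^ 2 + sY ^ 2) -
      Real.sqrt ((1 / 2 - (μX - μY - κ * (sX + sY)) / (sX ^ 2 + sY ^ 2)) ^ 2 +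
        2 * (r - μY - κ * sY) / (sX ^ 2 + sY ^ 2))) :
    (∀ σX σY : ℝ, 0 < σX → 0 < σY → μX - κ * σX < r →
      HasDerivAt (fun s => Ψ σX s)
        (2 * (κ - σY * Ψ σX σY) * (Ψ σX σY - 1) /
          ((σX ^ 2 + σY ^ 2) * (Ψ σX σY - Φ σX σY))) σY) ∧
    (∀ σX σY : ℝ, 0 < σX → 0 < σY → μX - κ * σX < r →
      HasDerivAt (fun s => Ψ s σY)
        (2 * Ψ σX σY * (κ - σX * (Ψ σX σY - 1)) /
          ((σX ^ 2 + σY ^ 2) * (Ψ σX σY - Φ σX σY))) σX) := by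
  subst hΨ hΦ
  constructor
  · intro σX σY hX hY hr
    exact aux1 μX μY κ r σX σY _ _ hκ hX hY hr rfl rfl
  · intro σX σY hX hY hr
    exact aux2 μX μY κ r σX σY _ _ hκ hX hY hr rfl rfl
end

section
/- Let ψ̂, φ̂ be real numbers with ψ̂ > 1 and φ̂ < 0, let c > 0, set l = (ψ̂(1 − φ̂)/(φ̂(1 − ψ̂)))^{1/(ψ̂ − φ̂)}, and define H(z) = (ψ̂/(ψ̂ − φ̂))(z/c)^{φ̂} − (φ̂/(ψ̂ − φ̂))(z/c)^{ψ̂} for z > 0. Then H(lc) = (ψ̂/(ψ̂ − 1))·l^{φ̂}, and the function z ↦ z/H(z) attains a strict global maximum over (0, ∞) at z = lc, with maximum value ((ψ̂ − 1)/ψ̂)·(ψ̂(1 − φ̂)/(φ̂(1 − ψ̂)))^{(1 − φ̂)/(ψ̂ − φ̂)}·c. -/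
/-!
Write `z = x · l c`. Since `l ^ (ψ - φ) = ψ (1 - φ) / (φ (1 - ψ))`, the value `H z` is a positive
multiple of `(ψ - 1) x ^ φ + (1 - φ) x ^ ψ`, and weighted AM–GM with weights
`(ψ - 1) / (ψ - φ)` and `(1 - φ) / (ψ - φ)` bounds this strictly below by `(ψ - φ) x` unless
`x = 1`, the geometric mean of `x ^ φ` and `x ^ ψ` being `x`.
-/

open Real

lemma sub_mul_lt_sub_mul_rpow_add_sub_mul_rpow {φ ψ x : ℝ} (hφ : φ < 1) (hψ : 1 < ψ)
    (hx : 0 < x) (hx₁ : x ≠ 1) :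
    (ψ - φ) * x < (ψ - 1) * x ^ φ + (1 - φ) * x ^ ψ := by
  have hψφ : 0 < ψ - φ := by linarith
  have hgeom : (x ^ φ) ^ ((ψ - 1) / (ψ - φ)) * (x ^ ψ) ^ ((1 - φ) / (ψ - φ)) = x := by
    rw [← rpow_mul hx.le, ← rpow_mul hx.le, ← rpow_add hx]
    convert rpow_one x using 2
    field_simp
    ring
  have hamgm := (geom_mean_lt_arith_mean2_weighted_iff_of_pos
    (div_pos (sub_pos.2 hψ) hψφ) (div_pos (sub_pos.2 hφ) hψφ) (rpow_pos_of_pos hx φ).le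
    (rpow_pos_of_pos hx ψ).le (by field_simp; ring)).2
    (fun h => by linarith [(rpow_right_inj hx hx₁).1 h])
  rw [hgeom] at hamgm
  calc (ψ - φ) * x
      < (ψ - φ) * ((ψ - 1) / (ψ - φ) * x ^ φ + (1 - φ) / (ψ - φ) * x ^ ψ) :=
        mul_lt_mul_of_pos_left hamgm hψφ
    _ = (ψ - 1) * x ^ φ + (1 - φ) * x ^ ψ := by field_simp

lemma rpow_combination_at_mul_eq {φ ψ c l x : ℝ} (hφ : φ ≠ 0) (hψ : ψ ≠ 1) (hψφ : ψ ≠ φ)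
    (hc : c ≠ 0) (hl : 0 < l) (hlψφ : l ^ (ψ - φ) = ψ * (1 - φ) / (φ * (1 - ψ))) (hx : 0 ≤ x) :
    ψ / (ψ - φ) * (x * l * c / c) ^ φ - φ / (ψ - φ) * (x * l * c / c) ^ ψ =
      ψ * l ^ φ / ((ψ - 1) * (ψ - φ)) * ((ψ - 1) * x ^ φ + (1 - φ) * x ^ ψ) := by
  have hlψ : l ^ ψ = l ^ φ * l ^ (ψ - φ) := by rw [← rpow_add hl, add_sub_cancel]
  rw [mul_div_cancel_right₀ _ hc, mul_rpow hx hl.le, mul_rpow hx hl.le, hlψ, hlψφ]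
  have : ψ - 1 ≠ 0 := sub_ne_zero.2 hψ
  have : 1 - ψ ≠ 0 := sub_ne_zero.2 hψ.symm
  have : ψ - φ ≠ 0 := sub_ne_zero.2 hψφ
  field_simp
  ring

/-- For `ψ̂ > 1`, `φ̂ < 0`, `c > 0`,
`l = (ψ̂(1 − φ̂)/(φ̂(1 − ψ̂)))^{1/(ψ̂ − φ̂)}` and
`H(z) = (ψ̂/(ψ̂ − φ̂))(z/c)^{φ̂} − (φ̂/(ψ̂ − φ̂))(z/c)^{ψ̂}`, one has
`H(lc) = (ψ̂/(ψ̂ − 1))·l^{φ̂}`, and `z ↦ z/H(z)` attains a strict global maximum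
over `(0, ∞)` at `z = lc`, with maximum value
`((ψ̂ − 1)/ψ̂)·(ψ̂(1 − φ̂)/(φ̂(1 − ψ̂)))^{(1 − φ̂)/(ψ̂ − φ̂)}·c`. -/
theorem floor_option_maximum (ψ φ c : ℝ) (hψ : 1 < ψ) (hφ : φ < 0) (hc : 0 < c)
    (l : ℝ) (hl : l = (ψ * (1 - φ) / (φ * (1 - ψ))) ^ (1 / (ψ - φ)))
    (H : ℝ → ℝ)
    (hH : H = fun z : ℝ => ψ / (ψ - φ) * (z / c) ^ φ - φ / (ψ - φ) * (z / c) ^ ψ) :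
    H (l * c) = ψ / (ψ - 1) * l ^ φ ∧
    (∀ z : ℝ, 0 < z → z ≠ l * c → z / H z < l * c / H (l * c)) ∧
    l * c / H (l * c) =
      (ψ - 1) / ψ * (ψ * (1 - φ) / (φ * (1 - ψ))) ^ ((1 - φ) / (ψ - φ)) * c := by
  set A := ψ * (1 - φ) / (φ * (1 - ψ))
  have hψφ : 0 < ψ - φ := by linarith
  have hA : 0 < A := div_pos (by nlinarith) (mul_pos_of_neg_of_neg hφ (by linarith))
  have hl_pos : 0 < l := hl ▸ rpow_pos_of_pos hA _
  have hlA : l ^ (ψ - φ) = A := by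
    rw [hl, ← rpow_mul hA.le, one_div_mul_cancel hψφ.ne', rpow_one]
  set K := ψ * l ^ φ / ((ψ - 1) * (ψ - φ))
  have hK : 0 < K := div_pos (by positivity) (mul_pos (by linarith) hψφ)
  have hH_scaled : ∀ x, 0 < x →
      H (x * l * c) = K * ((ψ - 1) * x ^ φ + (1 - φ) * x ^ ψ) := fun x hx =>
    hH ▸ rpow_combination_at_mul_eq hφ.ne (by linarith) (by linarith) hc.ne' hl_pos hlA hx.le
  have hH_lc : H (l * c) = K * (ψ - φ) := by
    simpa using hH_scaled 1 one_pos
  refine ⟨by rw [hH_lc]; simp only [K]; field_simp, fun z hz hz_ne => ?_, ?_⟩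
  · obtain ⟨x, hx, hx₁, rfl⟩ : ∃ x, 0 < x ∧ x ≠ 1 ∧ z = x * l * c :=
      ⟨z / (l * c), by positivity, fun h => hz_ne ((div_eq_one_iff_eq (by positivity)).1 h),
        by field_simp⟩
    have hcore := sub_mul_lt_sub_mul_rpow_add_sub_mul_rpow (hφ.trans one_pos) hψ hx hx₁
    rw [hH_scaled x hx, hH_lc, div_lt_div_iff₀ (mul_pos hK (by nlinarith)) (by positivity)]
    linear_combination (l * c * K) * hcore
  · have hlφ : A ^ ((1 - φ) / (ψ - φ)) = l / l ^ φ := by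
      rw [div_eq_mul_one_div (1 - φ), mul_comm, rpow_mul hA.le, ← hl, rpow_sub hl_pos, rpow_one]
    rw [hH_lc, hlφ]
    simp only [K]
    field_simp
end

section
/- Let ψ, φ be real numbers with φ < 1 < ψ, let A > 0, b > 0, and define H(z) = A·(((1 − φ)/(ψ − φ))(z/b)^{ψ} + ((ψ − 1)/(ψ − φ))(z/b)^{φ}) for z > 0. Then the equation H(z) = (z − 1)·H′(z) has exactly one solution z in the interval (max(1, b), ∞). -/
/-!
Let `k(z) = H(z) - (z - 1) H'(z)`, the value at `1` of the tangent line of `H` at `z`. Since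
`k' = -(z - 1) H''` and `H'' > 0` on `(b, ∞)`, `k` is strictly decreasing on `[max 1 b, ∞)`.
It is positive at `max 1 b`: if `b ≤ 1` it equals `H(1) > 0`, and otherwise `k(b) = H(b) / b`
by the smooth-fit identity `H(b) = b H'(b)`. Finally `k(z)` is dominated by its leading term
`-A (ψ - 1)(1 - φ)/(ψ - φ) · (z/b)^ψ`, so it tends to `-∞`, and the intermediate value theorem
gives the root.
-/

open Real Filter Set Asymptotics

theorem strictAntiOn_sub_sub_mul_deriv {f f' f'' : ℝ → ℝ} {c m : ℝ} (hcm : c ≤ m)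
    (hf : ∀ z ∈ Ici m, HasDerivAt f (f' z) z) (hf' : ∀ z ∈ Ici m, HasDerivAt f' (f'' z) z)
    (hf'' : ∀ z ∈ Ioi m, 0 < f'' z) :
    StrictAntiOn (fun z => f z - (z - c) * f' z) (Ici m) := by
  have hk : ∀ z ∈ Ici m, HasDerivAt (fun z => f z - (z - c) * f' z) (-((z - c) * f'' z)) z :=
    fun z hz => ((hf z hz).sub (((hasDerivAt_id' z).sub_const c).mul (hf' z hz))).congr_deriv
      (by ring)
  refine strictAntiOn_of_hasDerivWithinAt_neg (convex_Ici m)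
    (fun z hz => (hk z hz).continuousAt.continuousWithinAt)
    (fun z hz => (hk z (interior_subset hz)).hasDerivWithinAt) fun z hz => ?_
  rw [interior_Ici] at hz
  have hzc : 0 < z - c := by linarith [mem_Ioi.mp hz]
  exact neg_neg_of_pos (mul_pos hzc (hf'' z hz))

theorem existsUnique_mem_Ioi_eq_zero_of_strictAntiOn {k : ℝ → ℝ} {m : ℝ}
    (hk : ContinuousOn k (Ici m)) (hanti : StrictAntiOn k (Ici m)) (hm : 0 < k m)
    (hlim : Tendsto k atTop atBot) : ∃! z, z ∈ Ioi m ∧ k z = 0 := by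
  obtain ⟨w, hmw, hw⟩ := ((eventually_gt_atTop m).and (hlim.eventually_lt_atBot 0)).exists
  obtain ⟨z, hz, hkz⟩ := intermediate_value_Ioo' hmw.le (hk.mono Icc_subset_Ici_self) ⟨hw, hm⟩
  exact ⟨z, ⟨hz.1, hkz⟩, fun y hy =>
    hanti.injOn (mem_Ici_of_Ioi hy.1) (mem_Ici_of_Ioi hz.1) (hy.2.trans hkz.symm)⟩

theorem existsUnique_eq_sub_mul_deriv {f f' f'' : ℝ → ℝ} {c m : ℝ} (hcm : c ≤ m)
    (hf : ∀ z ∈ Ici m, HasDerivAt f (f' z) z) (hf' : ∀ z ∈ Ici m, HasDerivAt f' (f'' z) z)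
    (hf'' : ∀ z ∈ Ioi m, 0 < f'' z) (hm : (m - c) * f' m < f m)
    (hlim : Tendsto (fun z => f z - (z - c) * f' z) atTop atBot) :
    ∃! z, z ∈ Ioi m ∧ f z = (z - c) * deriv f z := by
  have hcont : ContinuousOn (fun z => f z - (z - c) * f' z) (Ici m) := fun z hz =>
    ((hf z hz).continuousAt.sub
      ((continuousAt_id.sub continuousAt_const).mul (hf' z hz).continuousAt)).continuousWithinAt
  obtain ⟨z, hz, huniq⟩ := existsUnique_mem_Ioi_eq_zero_of_strictAntiOn hcont
    (strictAntiOn_sub_sub_mul_deriv hcm hf hf' hf'') (sub_pos.mpr hm) hlim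
  have hderiv : ∀ y ∈ Ioi m, deriv f y = f' y := fun y hy => (hf y (mem_Ici_of_Ioi hy)).deriv
  refine ⟨z, ⟨hz.1, ?_⟩, fun y hy => huniq y ⟨hy.1, ?_⟩⟩
  · rw [hderiv z hz.1]; linarith [hz.2]
  · rw [← hderiv y hy.1]; linarith [hy.2]

theorem isLittleO_rpow_rpow_atTop {q p : ℝ} (hqp : q < p) :
    (fun u : ℝ => u ^ q) =o[atTop] fun u => u ^ p := by
  refine (isLittleO_iff_tendsto' ?_).mpr ?_
  · filter_upwards [eventually_gt_atTop 0] with u hu h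
    exact absurd h (rpow_pos_of_pos hu p).ne'
  · refine (tendsto_rpow_neg_atTop (sub_pos.mpr hqp)).congr' ?_
    filter_upwards [eventually_gt_atTop 0] with u hu
    rw [neg_sub, rpow_sub hu]

theorem tendsto_sub_const_mul_rpow_atBot {f : ℝ → ℝ} {κ p : ℝ} (hκ : 0 < κ) (hp : 0 < p)
    (hf : f =o[atTop] fun u => u ^ p) : Tendsto (fun u => f u - κ * u ^ p) atTop atBot := by
  have hlead : Tendsto (fun u : ℝ => -κ * u ^ p) atTop atBot :=
    (tendsto_rpow_atTop hp).const_mul_atTop_of_neg (neg_neg_of_pos hκ)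
  have hf' : f =o[atTop] fun u => -κ * u ^ p :=
    (isLittleO_const_mul_right_iff (neg_ne_zero.mpr hκ.ne')).mpr hf
  have := (hf'.add_isEquivalent IsEquivalent.refl).symm.tendsto_atBot hlead
  exact this.congr fun u => by simp only [Pi.add_apply]; ring

noncomputable def rpowPair (b α β p q z : ℝ) : ℝ := α * (z / b) ^ p + β * (z / b) ^ q

theorem hasDerivAt_const_mul_div_rpow {b z : ℝ} (hb : b ≠ 0) (hz : z ≠ 0) (α p : ℝ) :
    HasDerivAt (fun x => α * (x / b) ^ p) (α * p / b * (z / b) ^ (p - 1)) z := by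
  have := ((Real.hasDerivAt_rpow_const (p := p) (Or.inl (div_ne_zero hz hb))).comp z
    ((hasDerivAt_id' z).div_const b)).const_mul α
  exact this.congr_deriv (by field_simp)

theorem hasDerivAt_rpowPair {b z : ℝ} (hb : b ≠ 0) (hz : z ≠ 0) (α β p q : ℝ) :
    HasDerivAt (rpowPair b α β p q) (rpowPair b (α * p / b) (β * q / b) (p - 1) (q - 1) z) z :=
  (hasDerivAt_const_mul_div_rpow hb hz α p).add (hasDerivAt_const_mul_div_rpow hb hz β q)

theorem rpowPair_pos_of_one_lt {b α β p q z : ℝ} (hα : 0 < α) (hαβ : 0 ≤ α + β) (hqp : q < p)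
    (hz : 1 < z / b) : 0 < rpowPair b α β p q z := by
  have hlt : (z / b) ^ q < (z / b) ^ p := rpow_lt_rpow_of_exponent_lt hz hqp
  have hq : 0 < (z / b) ^ q := rpow_pos_of_pos (by linarith) q
  unfold rpowPair
  nlinarith

theorem sub_one_mul_rpowPair_lt_rpowPair_max_one {b α β p q : ℝ} (hb : 0 < b) (hα : 0 < α)
    (hβ : 0 < β) (hfit : α * p + β * q ≤ α + β) :
    (max 1 b - 1) * rpowPair b (α * p / b) (β * q / b) (p - 1) (q - 1) (max 1 b) <
      rpowPair b α β p q (max 1 b) := by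
  rcases le_or_gt b 1 with hb1 | hb1
  · rw [max_eq_left hb1, sub_self, zero_mul, rpowPair]
    positivity
  · rw [max_eq_right hb1.le]
    simp only [rpowPair, div_self hb.ne', one_rpow, mul_one]
    have hrw : (b - 1) * (α * p / b + β * q / b) = (α * p + β * q) * (b - 1) / b := by
      field_simp
    rw [hrw, div_lt_iff₀ hb]
    nlinarith

theorem tendsto_rpowPair_sub_mul_deriv_atBot {b α p q : ℝ} (hb : 0 < b) (hα : 0 < α)
    (hp : 1 < p) (hqp : q < p) (β c : ℝ) :
    Tendsto (fun z => rpowPair b α β p q z -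
      (z - c) * rpowPair b (α * p / b) (β * q / b) (p - 1) (q - 1) z) atTop atBot := by
  have hlower : (fun u : ℝ => β * (1 - q) * u ^ q + α * p * c / b * u ^ (p - 1) +
      β * q * c / b * u ^ (q - 1)) =o[atTop] fun u => u ^ p :=
    (((isLittleO_rpow_rpow_atTop hqp).const_mul_left _).add
      ((isLittleO_rpow_rpow_atTop (by linarith)).const_mul_left _)).add
      ((isLittleO_rpow_rpow_atTop (by linarith)).const_mul_left _)
  have hK := (tendsto_sub_const_mul_rpow_atBot (mul_pos hα (sub_pos.mpr hp)) (by linarith)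
    hlower).comp (tendsto_id.atTop_div_const hb)
  refine hK.congr' ?_
  filter_upwards [eventually_gt_atTop 0] with z hz
  have hu : z / b ≠ 0 := (div_pos hz hb).ne'
  simp only [Function.comp_apply, id, rpowPair, rpow_sub_one hu]
  field_simp
  ring

/-- For `φ < 1 < ψ`, `A > 0`, `b > 0` and
`H(z) = A·(((1 − φ)/(ψ − φ))(z/b)^ψ + ((ψ − 1)/(ψ − φ))(z/b)^φ)`, the equation
`H(z) = (z − 1)·H′(z)` has exactly one solution in `(max(1, b), ∞)`. -/
theorem straddle_upper_boundary (ψ φ A b : ℝ)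
    (hφ : φ < 1) (hψ : 1 < ψ) (hA : 0 < A) (hb : 0 < b)
    (H : ℝ → ℝ)
    (hH : H = fun z : ℝ => A * ((1 - φ) / (ψ - φ) * (z / b) ^ ψ +
      (ψ - 1) / (ψ - φ) * (z / b) ^ φ)) :
    ∃! z : ℝ, z ∈ Set.Ioi (max 1 b) ∧ H z = (z - 1) * deriv H z := by
  set α := A * ((1 - φ) / (ψ - φ)) with hα_def
  set β := A * ((ψ - 1) / (ψ - φ)) with hβ_def
  have hψφ : 0 < ψ - φ := by linarith
  have hα : 0 < α := mul_pos hA (div_pos (by linarith) hψφ)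
  have hβ : 0 < β := mul_pos hA (div_pos (by linarith) hψφ)
  -- smooth fit at the lower boundary: `H(b) = b H'(b)`
  have hfit : α * ψ + β * φ = α + β := by
    rw [hα_def, hβ_def]; field_simp; ring
  have hsecond : α * ψ / b * (ψ - 1) / b + β * φ / b * (φ - 1) / b =
      A * (ψ - 1) * (1 - φ) / b ^ 2 := by
    rw [hα_def, hβ_def]; field_simp; ring
  have hne : ∀ z ∈ Ici (max 1 b), z ≠ 0 := fun z hz =>
    ((zero_lt_one.trans_le (le_max_left 1 b)).trans_le hz).ne'
  obtain rfl : H = rpowPair b α β ψ φ := by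
    rw [hH]; funext z; simp only [rpowPair]; ring
  refine existsUnique_eq_sub_mul_deriv (le_max_left 1 b)
    (fun z hz => hasDerivAt_rpowPair hb.ne' (hne z hz) _ _ _ _)
    (fun z hz => hasDerivAt_rpowPair hb.ne' (hne z hz) _ _ _ _)
    (fun z hz => rpowPair_pos_of_one_lt ?_ ?_ (by linarith)
      ((one_lt_div hb).mpr ((le_max_right 1 b).trans_lt hz)))
    (sub_one_mul_rpowPair_lt_rpowPair_max_one hb hα hβ hfit.le)
    (tendsto_rpowPair_sub_mul_deriv_atBot hb hα hψ (by linarith) _ _)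
  · exact div_pos (mul_pos (div_pos (mul_pos hα (by linarith)) hb) (by linarith)) hb
  · rw [hsecond]
    exact div_nonneg (mul_nonneg (mul_nonneg hA.le (by linarith)) (by linarith)) (sq_nonneg b)
end

section
/- Let ψ, φ be real numbers with φ < 0 < ψ, let c > 0, and define H(z) = (ψ/(ψ − φ))(z/c)^{φ} − (φ/(ψ − φ))(z/c)^{ψ} for z > 0. Then the equation H(z) = (z − 1)·H′(z) has exactly one solution z in the interval (0, min(1, c)). -/
open Real Filter Set Topology

set_option maxHeartbeats 1000000

/-- For `φ < 0 < ψ`, `c > 0` and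
`H(z) = (ψ/(ψ − φ))(z/c)^φ − (φ/(ψ − φ))(z/c)^ψ`, the equation
`H(z) = (z − 1)·H′(z)` has exactly one solution in `(0, min(1, c))`. -/
theorem straddle_lower_boundary (ψ φ c : ℝ)
    (hφ : φ < 0) (hψ : 0 < ψ) (hc : 0 < c)
    (H : ℝ → ℝ)
    (hH : H = fun z : ℝ => ψ / (ψ - φ) * (z / c) ^ φ - φ / (ψ - φ) * (z / c) ^ ψ) :
    ∃! z : ℝ, z ∈ Set.Ioo 0 (min 1 c) ∧ H z = (z - 1) * deriv H z := by
  have hψφ : (0:ℝ) < ψ - φ := by linarith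
  set m := min 1 c with hm
  have hm0 : 0 < m := lt_min one_pos hc
  have hm1 : m ≤ 1 := min_le_left _ _
  set F : ℝ → ℝ := fun z =>
    ψ * (z/c)^φ * ((1-φ)*z + φ) + φ * (z/c)^ψ * ((ψ-1)*z - ψ) with hF
  -- derivatives of the power pieces
  have hpow : ∀ (p z : ℝ), 0 < z →
      HasDerivAt (fun z : ℝ => (z/c)^p) (p * (z/c)^(p-1) * (1/c)) z := by
    intro p z hz
    have huc : z / c ≠ 0 := (div_pos hz hc).ne'
    have h1 : HasDerivAt (fun z : ℝ => z / c) (1/c) z := by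
      simpa using (hasDerivAt_id z).div_const c
    have := (Real.hasDerivAt_rpow_const (x := z/c) (p := p) (Or.inl huc)).comp z h1
    exact this
  have hHd : ∀ z : ℝ, 0 < z → HasDerivAt H
      (ψ/(ψ-φ) * (φ * (z/c)^(φ-1) * (1/c)) - φ/(ψ-φ) * (ψ * (z/c)^(ψ-1) * (1/c))) z := by
    intro z hz
    rw [hH]
    exact ((hpow φ z hz).const_mul _).sub ((hpow ψ z hz).const_mul _)
  -- rewriting (z/c)^(p-1)
  have epow : ∀ (p z : ℝ), 0 < z → (z/c)^(p-1) = (z/c)^p / (z/c) := by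
    intro p z hz
    rw [Real.rpow_sub (div_pos hz hc), Real.rpow_one]
  -- the key equivalence
  have hkey : ∀ z : ℝ, 0 < z → (H z = (z-1) * deriv H z ↔ F z = 0) := by
    intro z hz
    have hd := hHd z hz
    have hzc : (0:ℝ) < z / c := div_pos hz hc
    have hid : F z = z * (ψ - φ) * (H z - (z-1) * deriv H z) := by
      rw [hd.deriv, hH, hF]
      simp only
      rw [epow φ z hz, epow ψ z hz]
      field_simp
      ring
    constructor
    · intro h; rw [hid, h]; ring
    · intro h
      rw [hid] at h
      have h2 : H z - (z-1) * deriv H z = 0 := by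
        rcases mul_eq_zero.mp h with h' | h'
        · rcases mul_eq_zero.mp h' with h'' | h''
          · exact absurd h'' hz.ne'
          · exact absurd h'' hψφ.ne'
        · exact h'
      linarith [h2]
  -- derivative of F
  have hFd : ∀ z : ℝ, 0 < z → HasDerivAt F
      (ψ * (φ * (z/c)^(φ-1) * (1/c)) * ((1-φ)*z + φ) + ψ * (z/c)^φ * (1-φ) +
       (φ * (ψ * (z/c)^(ψ-1) * (1/c)) * ((ψ-1)*z - ψ) + φ * (z/c)^ψ * (ψ-1))) z := by
    intro z hz
    have hP : HasDerivAt (fun z : ℝ => (1-φ)*z + φ) (1-φ) z := by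
      simpa using (((hasDerivAt_id z).const_mul (1-φ)).add_const φ)
    have hQ : HasDerivAt (fun z : ℝ => (ψ-1)*z - ψ) (ψ-1) z := by
      simpa using (((hasDerivAt_id z).const_mul (ψ-1)).sub_const ψ)
    have h1 := (((hpow φ z hz).const_mul ψ).mul hP)
    have h2 := (((hpow ψ z hz).const_mul φ).mul hQ)
    have := h1.add h2
    rw [hF]
    exact this
  -- F is strictly monotone on Ioo 0 1
  have hmono : StrictMonoOn F (Ioo (0:ℝ) 1) := by
    apply strictMonoOn_of_deriv_pos (convex_Ioo 0 1)
    · intro z hz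
      exact (hFd z hz.1).continuousAt.continuousWithinAt
    · rw [interior_Ioo]
      intro z hz
      rw [(hFd z hz.1).deriv]
      have hz0 := hz.1
      have hz1 := hz.2
      have hzc : (0:ℝ) < z / c := div_pos hz0 hc
      have key : ψ * (φ * (z/c)^(φ-1) * (1/c)) * ((1-φ)*z + φ) + ψ * (z/c)^φ * (1-φ) +
          (φ * (ψ * (z/c)^(ψ-1) * (1/c)) * ((ψ-1)*z - ψ) + φ * (z/c)^ψ * (ψ-1)) =
          (ψ * (z/c)^φ * (z + φ^2*(1-z)) + (-φ) * (z/c)^ψ * (z + ψ^2*(1-z))) / z := by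
        rw [epow φ z hz0, epow ψ z hz0]
        field_simp
        ring
      rw [key]
      have p1 : 0 < z + φ^2*(1-z) := by nlinarith [sq_nonneg φ]
      have p2 : 0 < z + ψ^2*(1-z) := by nlinarith [sq_nonneg ψ]
      have r1 : 0 < (z/c)^φ := Real.rpow_pos_of_pos hzc _
      have r2 : 0 < (z/c)^ψ := Real.rpow_pos_of_pos hzc _
      have := add_pos (mul_pos (mul_pos hψ r1) p1)
        (mul_pos (mul_pos (by linarith : (0:ℝ) < -φ) r2) p2)
      positivity
  -- F m > 0
  have hFm : 0 < F m := by
    rw [hF]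
    simp only
    rcases le_total c 1 with h | h
    · have hmc : m = c := min_eq_right h
      rw [hmc, div_self hc.ne', Real.one_rpow, Real.one_rpow]
      nlinarith [mul_pos hc hψφ]
    · have hmc : m = 1 := min_eq_left h
      rw [hmc]
      have r1 : 0 < ((1:ℝ)/c)^φ := Real.rpow_pos_of_pos (by positivity) _
      have r2 : 0 < ((1:ℝ)/c)^ψ := Real.rpow_pos_of_pos (by positivity) _
      nlinarith [mul_pos hψ r1, mul_pos (by linarith : (0:ℝ) < -φ) r2]
  -- F tends to -∞ at 0⁺
  have hdivc : Tendsto (fun z : ℝ => z / c) (𝓝[>] (0:ℝ)) (𝓝[>] (0:ℝ)) := by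
    apply tendsto_nhdsWithin_of_tendsto_nhds_of_eventually_within
    · have : Tendsto (fun z : ℝ => z / c) (𝓝 (0:ℝ)) (𝓝 (0/c)) :=
        (continuous_id.div_const c).tendsto 0
      simpa using this.mono_left nhdsWithin_le_nhds
    · filter_upwards [self_mem_nhdsWithin] with z hz
      exact div_pos hz hc
  have htop : Tendsto (fun z : ℝ => (z/c) ^ φ) (𝓝[>] (0:ℝ)) atTop := by
    have h2 : Tendsto (fun x : ℝ => x ^ φ) (𝓝[>] (0:ℝ)) atTop := by
      have h3 : Tendsto (fun x : ℝ => (x⁻¹) ^ (-φ)) (𝓝[>] (0:ℝ)) atTop :=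
        (tendsto_rpow_atTop (by linarith : (0:ℝ) < -φ)).comp tendsto_inv_nhdsGT_zero
      refine h3.congr' ?_
      filter_upwards [self_mem_nhdsWithin] with x hx
      rw [Real.inv_rpow hx.le, ← Real.rpow_neg hx.le, neg_neg]
    exact h2.comp hdivc
  have hzero : Tendsto (fun z : ℝ => (z/c)^ψ) (𝓝[>] (0:ℝ)) (𝓝 0) := by
    have h2 : ContinuousAt (fun x : ℝ => x ^ ψ) 0 :=
      Real.continuousAt_rpow_const 0 ψ (Or.inr hψ.le)
    have h3 := h2.tendsto.comp (hdivc.mono_right nhdsWithin_le_nhds)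
    rw [Real.zero_rpow hψ.ne'] at h3
    exact h3
  have hterm1 : Tendsto (fun z : ℝ => ψ * (z/c)^φ * ((1-φ)*z + φ)) (𝓝[>] (0:ℝ)) atBot := by
    have ha : Tendsto (fun z : ℝ => ψ * (z/c)^φ) (𝓝[>] (0:ℝ)) atTop :=
      htop.const_mul_atTop hψ
    have hb : Tendsto (fun z : ℝ => (1-φ)*z + φ) (𝓝[>] (0:ℝ)) (𝓝 φ) := by
      have hcont : Continuous fun z : ℝ => (1-φ)*z + φ :=
        (continuous_const.mul continuous_id).add continuous_const
      have := (hcont.tendsto 0).mono_left (nhdsWithin_le_nhds (s := Set.Ioi (0:ℝ)))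
      simpa using this
    exact ha.atTop_mul_neg hφ hb
  have hterm2 : Tendsto (fun z : ℝ => φ * (z/c)^ψ * ((ψ-1)*z - ψ)) (𝓝[>] (0:ℝ))
      (𝓝 (φ * 0 * ((ψ-1)*0 - ψ))) := by
    apply Tendsto.mul
    · exact (tendsto_const_nhds.mul hzero)
    · have hcont : Continuous fun z : ℝ => (ψ-1)*z - ψ := by continuity
      exact (hcont.tendsto 0).mono_left nhdsWithin_le_nhds
  have hbot : Tendsto F (𝓝[>] (0:ℝ)) atBot := by
    rw [hF]
    have := hterm2.add_atBot hterm1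
    refine this.congr ?_
    intro z; ring
  -- a point where F is negative
  have hev : ∀ᶠ z in 𝓝[>] (0:ℝ), F z < 0 := hbot.eventually_lt_atBot 0
  have hmem : Ioo (0:ℝ) m ∈ 𝓝[>] (0:ℝ) := Ioo_mem_nhdsGT_of_mem ⟨le_rfl, hm0⟩
  have hmem' : ∀ᶠ z in 𝓝[>] (0:ℝ), z ∈ Ioo 0 m := hmem
  obtain ⟨z₁, hz₁m, hz₁neg⟩ := (hmem'.and hev).exists
  -- existence of a root by IVT
  have hcont : ContinuousOn F (Icc z₁ m) := by
    intro z hz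
    exact (hFd z (lt_of_lt_of_le hz₁m.1 hz.1)).continuousAt.continuousWithinAt
  have h0mem : (0:ℝ) ∈ Ioo (F z₁) (F m) := ⟨hz₁neg, hFm⟩
  obtain ⟨z₀, hz₀mem, hz₀⟩ := intermediate_value_Ioo hz₁m.2.le hcont h0mem
  have hz₀pos : 0 < z₀ := lt_trans hz₁m.1 hz₀mem.1
  have hz₀lt : z₀ < m := hz₀mem.2
  have hsub : Ioo (0:ℝ) m ⊆ Ioo (0:ℝ) 1 := fun x hx => ⟨hx.1, lt_of_lt_of_le hx.2 hm1⟩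
  refine ⟨z₀, ⟨⟨hz₀pos, hz₀lt⟩, (hkey z₀ hz₀pos).mpr hz₀⟩, ?_⟩
  rintro y ⟨hy, hyeq⟩
  have hFy : F y = 0 := (hkey y hy.1).mp hyeq
  exact hmono.injOn (hsub hy) (hsub ⟨hz₀pos, hz₀lt⟩) (by rw [hFy, hz₀])
end
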